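/- arXiv:2601.08456 — 11 statements merged into one kernel-verified Lean document; each statement's English description precedes it below -/
import Mathlib

section
/- For real q with 0 ≤ q < 1, the series ∑_{n=0}^∞ (-1)^n q^{n(n+1)/2} equals 1 + ∑_{n=1}^∞ (-1)^n q^n · ∏_{k=1}^{n} (1+q^{2k-1})/(1+q^{2k}). -/
/-!
Let `θ(x) = ∑ xⁿ q^(n(n+1)/2)` and let `F(x, t) = ∑ cₙ(x) tⁿ` be Fine's function with
`cₙ(x) = ∏_{k<n} (1 - x q^(2k+1)) / (1 - x q^(2k+2))`. Shifting the index by two gives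
`θ(x) = 1 + xq + x²q³ θ(xq²)`. Fine's functional equations, one in `t`,
`(1 - t) F(x, t) = 1 - x + x (1 - tq) F(x, tq²)`, and one shifting `x ↦ xq²`, combine at
`t = xq` into the same recursion for `S(x) = F(x, xq)`. Hence `D = θ - S` satisfies
`D(x) = x²q³ D(xq²)`; as `D` is bounded on `{y : |y| ≤ |x|}` and `|x|²q³ < 1` whenever
`|x| q < 1`, iterating gives `D(x) = 0`. The theorem is the case `x = -1`.
-/

open Finset Filter Set

theorem eq_zero_of_abs_le_mul_abs_comp {α : Type*} {s : Set α} {f : α → ℝ} {g : α → α}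
    {r C : ℝ} (hg : MapsTo g s s) (hr0 : 0 ≤ r) (hr1 : r < 1) (hC : ∀ y ∈ s, |f y| ≤ C)
    (hf : ∀ y ∈ s, |f y| ≤ r * |f (g y)|) {y : α} (hy : y ∈ s) : f y = 0 := by
  have bound : ∀ N : ℕ, ∀ y ∈ s, |f y| ≤ r ^ N * C := by
    intro N
    induction N with
    | zero => simpa using hC
    | succ N ih =>
      intro y hy
      calc |f y| ≤ r * |f (g y)| := hf y hy
        _ ≤ r * (r ^ N * C) := by gcongr; exact ih _ (hg hy)
        _ = r ^ (N + 1) * C := by ring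
  have hlim : Tendsto (fun N : ℕ => r ^ N * C) atTop (nhds 0) := by
    simpa using (tendsto_pow_atTop_nhds_zero_of_lt_one hr0 hr1).mul_const C
  exact abs_nonpos_iff.mp (ge_of_tendsto' hlim fun N => bound N y hy)

namespace RogersFine

noncomputable def coeff (q x : ℝ) (n : ℕ) : ℝ :=
  ∏ k ∈ range n, (1 - x * q ^ (2 * k + 1)) / (1 - x * q ^ (2 * k + 2))

noncomputable def fineSeries (q x t : ℝ) : ℝ := ∑' n : ℕ, coeff q x n * t ^ n

noncomputable def partialTheta (q x : ℝ) : ℝ := ∑' n : ℕ, x ^ n * q ^ (n * (n + 1) / 2)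

variable {q x t : ℝ}

@[simp]
lemma coeff_zero : coeff q x 0 = 1 := prod_range_zero _

lemma coeff_succ (n : ℕ) :
    coeff q x (n + 1) = coeff q x n * ((1 - x * q ^ (2 * n + 1)) / (1 - x * q ^ (2 * n + 2))) :=
  prod_range_succ _ _

lemma coeff_succ' (n : ℕ) :
    coeff q x (n + 1) = (1 - x * q) / (1 - x * q ^ 2) * coeff q (x * q ^ 2) n := by
  rw [coeff, prod_range_succ', mul_comm, coeff]
  congr 1
  · ring_nf
  · refine prod_congr rfl fun k _ => ?_
    ring_nf

lemma norm_partialTheta_term_le (hq0 : 0 ≤ q) (hq1 : q ≤ 1) (n : ℕ) :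
    ‖x ^ n * q ^ (n * (n + 1) / 2)‖ ≤ (|x| * q) ^ n := by
  rw [norm_mul, norm_pow, norm_pow, Real.norm_eq_abs, Real.norm_eq_abs, abs_of_nonneg hq0,
    mul_pow]
  have hn : n ≤ n * (n + 1) / 2 := by
    rcases n with _ | n
    · rfl
    · exact (Nat.le_div_iff_mul_le two_pos).mpr (Nat.mul_le_mul_left _ (by omega))
  exact mul_le_mul_of_nonneg_left (pow_le_pow_of_le_one hq0 hq1 hn) (by positivity)

section
variable (hq0 : 0 ≤ q) (hq1 : q ≤ 1) (hxq : |x| * q < 1)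
include hq0 hq1 hxq

lemma one_sub_mul_pow_pos {m : ℕ} (hm : m ≠ 0) : 0 < 1 - x * q ^ m := by
  have : x * q ^ m ≤ |x| * q :=
    calc x * q ^ m ≤ |x| * q ^ m := by gcongr; exact le_abs_self x
      _ ≤ |x| * q := by gcongr; exact pow_le_of_le_one hq0 hq1 hm
  linarith

lemma coeff_succ_mul (n : ℕ) :
    coeff q x (n + 1) * (1 - x * q ^ (2 * n + 2)) = coeff q x n * (1 - x * q ^ (2 * n + 1)) := by
  rw [coeff_succ, mul_assoc, div_mul_cancel₀ _ (one_sub_mul_pow_pos hq0 hq1 hxq (by omega)).ne']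

lemma coeff_nonneg (n : ℕ) : 0 ≤ coeff q x n :=
  prod_nonneg fun _ _ => div_nonneg (one_sub_mul_pow_pos hq0 hq1 hxq (by omega)).le
    (one_sub_mul_pow_pos hq0 hq1 hxq (by omega)).le

lemma coeff_le (n : ℕ) : coeff q x n ≤ 1 + |x| := by
  rcases le_total x 0 with hx | hx
  · -- for `x ≤ 0` the factors are dominated by the telescoping ones
    -- `(1 - x q^(2k)) / (1 - x q^(2k+2))`
    have telescope : ∀ n, coeff q x n * (1 - x * q ^ (2 * n)) ≤ 1 - x := by
      intro n
      induction n with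
      | zero => simp
      | succ n ih =>
        calc coeff q x (n + 1) * (1 - x * q ^ (2 * (n + 1)))
            = coeff q x n * (1 - x * q ^ (2 * n + 1)) := coeff_succ_mul hq0 hq1 hxq n
          _ ≤ coeff q x n * (1 - x * q ^ (2 * n)) := by
            have := mul_le_mul_of_nonpos_left
              (pow_le_pow_of_le_one hq0 hq1 (show 2 * n ≤ 2 * n + 1 by omega)) hx
            exact mul_le_mul_of_nonneg_left (by linarith) (coeff_nonneg hq0 hq1 hxq n)
          _ ≤ 1 - x := ih
    calc coeff q x n ≤ coeff q x n * (1 - x * q ^ (2 * n)) :=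
          le_mul_of_one_le_right (coeff_nonneg hq0 hq1 hxq n)
            (by nlinarith [pow_nonneg hq0 (2 * n)])
      _ ≤ 1 + |x| := by rw [abs_of_nonpos hx]; linarith [telescope n]
  · have hle : coeff q x n ≤ 1 := by
      refine prod_le_one (fun _ _ => div_nonneg (one_sub_mul_pow_pos hq0 hq1 hxq (by omega)).le
        (one_sub_mul_pow_pos hq0 hq1 hxq (by omega)).le) fun k _ => ?_
      refine div_le_one_of_le₀ ?_ (one_sub_mul_pow_pos hq0 hq1 hxq (by omega)).le
      have := pow_le_pow_of_le_one hq0 hq1 (show 2 * k + 1 ≤ 2 * k + 2 by omega)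
      nlinarith
    linarith [abs_nonneg x]

lemma norm_coeff_mul_pow_le (n : ℕ) : ‖coeff q x n * t ^ n‖ ≤ (1 + |x|) * |t| ^ n := by
  rw [norm_mul, norm_pow, Real.norm_eq_abs, Real.norm_eq_abs,
    abs_of_nonneg (coeff_nonneg hq0 hq1 hxq n)]
  gcongr
  exact coeff_le hq0 hq1 hxq n

lemma abs_mul_sq_mul_lt_one : |x * q ^ 2| * q < 1 := by
  calc |x * q ^ 2| * q = |x| * q * q ^ 2 := by rw [abs_mul, abs_pow, abs_of_nonneg hq0]; ring
    _ ≤ |x| * q := mul_le_of_le_one_right (by positivity) (pow_le_one₀ hq0 hq1)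
    _ < 1 := hxq

section
variable (ht : |t| < 1)
include ht

lemma hasSum_fineSeries : HasSum (fun n => coeff q x n * t ^ n) (fineSeries q x t) :=
  (Summable.of_norm_bounded ((summable_geometric_of_lt_one (abs_nonneg t) ht).mul_left _)
    (norm_coeff_mul_pow_le hq0 hq1 hxq)).hasSum

lemma hasSum_fineSeries_succ :
    HasSum (fun n => coeff q x (n + 1) * t ^ (n + 1)) (fineSeries q x t - 1) := by
  simpa using (hasSum_nat_add_iff' 1).mpr (hasSum_fineSeries hq0 hq1 hxq ht)

lemma abs_fineSeries_le : |fineSeries q x t| ≤ (1 + |x|) / (1 - |t|) := by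
  rw [← Real.norm_eq_abs, div_eq_mul_inv]
  exact tsum_of_norm_bounded ((hasSum_geometric_of_lt_one (abs_nonneg t) ht).mul_left _)
    (norm_coeff_mul_pow_le hq0 hq1 hxq)

lemma one_sub_mul_fineSeries :
    (1 - t) * fineSeries q x t = 1 - x + x * (1 - t * q) * fineSeries q x (t * q ^ 2) := by
  have htq : |t * q ^ 2| < 1 := by
    rw [abs_mul, abs_pow, abs_of_nonneg hq0]
    nlinarith [abs_nonneg t, pow_le_one₀ hq0 hq1 (n := 2), pow_nonneg hq0 2]
  have lhs : HasSum (fun n => coeff q x (n + 1) * t ^ (n + 1) - coeff q x n * t ^ (n + 1))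
      (fineSeries q x t - 1 - t * fineSeries q x t) :=
    (hasSum_fineSeries_succ hq0 hq1 hxq ht).sub
      (((hasSum_fineSeries hq0 hq1 hxq ht).mul_left t).congr_fun fun n => by ring)
  have rhs := ((hasSum_fineSeries_succ hq0 hq1 hxq htq).mul_left x).sub
    ((hasSum_fineSeries hq0 hq1 hxq htq).mul_left (x * t * q))
  have := lhs.unique <| rhs.congr_fun fun n => by
    linear_combination t ^ (n + 1) * coeff_succ_mul hq0 hq1 hxq n
  linear_combination this

lemma fineSeries_eq_one_add_mul_fineSeries :
    fineSeries q x t = 1 + t * ((1 - x * q) / (1 - x * q ^ 2)) * fineSeries q (x * q ^ 2) t := by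
  have hxq' := abs_mul_sq_mul_lt_one hq0 hq1 hxq
  have := (hasSum_fineSeries_succ hq0 hq1 hxq ht).unique <|
    ((hasSum_fineSeries hq0 hq1 hxq' ht).mul_left (t * ((1 - x * q) / (1 - x * q ^ 2)))).congr_fun
      fun n => by rw [coeff_succ']; ring
  linarith

end

lemma fineSeries_mul_eq_one_add :
    fineSeries q x (x * q)
      = 1 + x * q + x ^ 2 * q ^ 3 * fineSeries q (x * q ^ 2) (x * q ^ 2 * q) := by
  have htxq : |x * q| < 1 := by rwa [abs_mul, abs_of_nonneg hq0]
  have hden : 1 - x * q ^ 2 ≠ 0 := (one_sub_mul_pow_pos hq0 hq1 hxq two_ne_zero).ne'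
  have feq := one_sub_mul_fineSeries hq0 hq1 (abs_mul_sq_mul_lt_one hq0 hq1 hxq) htxq
  rw [show x * q * q ^ 2 = x * q ^ 2 * q by ring] at feq
  have hF : (1 - x * q) / (1 - x * q ^ 2) * fineSeries q (x * q ^ 2) (x * q)
      = 1 + x * q ^ 2 * fineSeries q (x * q ^ 2) (x * q ^ 2 * q) := by
    rw [div_mul_eq_mul_div, feq, div_eq_iff hden]
    ring
  rw [fineSeries_eq_one_add_mul_fineSeries hq0 hq1 hxq htxq, mul_assoc, hF]
  ring

lemma hasSum_partialTheta :
    HasSum (fun n => x ^ n * q ^ (n * (n + 1) / 2)) (partialTheta q x) :=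
  (Summable.of_norm_bounded (summable_geometric_of_lt_one (by positivity) hxq)
    (norm_partialTheta_term_le hq0 hq1)).hasSum

lemma abs_partialTheta_le : |partialTheta q x| ≤ (1 - |x| * q)⁻¹ := by
  rw [← Real.norm_eq_abs]
  exact tsum_of_norm_bounded (hasSum_geometric_of_lt_one (by positivity) hxq)
    (norm_partialTheta_term_le hq0 hq1)

lemma partialTheta_eq_one_add :
    partialTheta q x = 1 + x * q + x ^ 2 * q ^ 3 * partialTheta q (x * q ^ 2) := by
  have hexp (n : ℕ) : (n + 2) * (n + 2 + 1) / 2 = n * (n + 1) / 2 + (2 * n + 3) := by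
    rw [show (n + 2) * (n + 2 + 1) = n * (n + 1) + 2 * (2 * n + 3) by ring,
      Nat.add_mul_div_left _ _ two_pos]
  have := ((hasSum_nat_add_iff' 2).mpr (hasSum_partialTheta hq0 hq1 hxq)).unique <|
    ((hasSum_partialTheta hq0 hq1 (abs_mul_sq_mul_lt_one hq0 hq1 hxq)).mul_left
      (x ^ 2 * q ^ 3)).congr_fun fun n => by rw [hexp, pow_add]; ring
  simp only [sum_range_succ, sum_range_zero] at this
  linear_combination this

lemma partialTheta_sub_fineSeries_eq :
    partialTheta q x - fineSeries q x (x * q)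
      = x ^ 2 * q ^ 3 *
          (partialTheta q (x * q ^ 2) - fineSeries q (x * q ^ 2) (x * q ^ 2 * q)) := by
  rw [partialTheta_eq_one_add hq0 hq1 hxq, fineSeries_mul_eq_one_add hq0 hq1 hxq]
  ring

lemma abs_partialTheta_sub_fineSeries_le :
    |partialTheta q x - fineSeries q x (x * q)| ≤ (2 + |x|) / (1 - |x| * q) := by
  have hxq' : |x * q| = |x| * q := by rw [abs_mul, abs_of_nonneg hq0]
  calc |partialTheta q x - fineSeries q x (x * q)|
      ≤ |partialTheta q x| + |fineSeries q x (x * q)| := abs_sub _ _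
    _ ≤ (1 - |x| * q)⁻¹ + (1 + |x|) / (1 - |x * q|) :=
      add_le_add (abs_partialTheta_le hq0 hq1 hxq)
        (abs_fineSeries_le hq0 hq1 hxq (hxq'.trans_lt hxq))
    _ = (2 + |x|) / (1 - |x| * q) := by rw [hxq']; ring

theorem partialTheta_eq_fineSeries : partialTheta q x = fineSeries q x (x * q) := by
  let s := {y : ℝ | |y| ≤ |x|}
  have hs : ∀ y ∈ s, |y| * q < 1 := fun y hy => (mul_le_mul_of_nonneg_right hy hq0).trans_lt hxq
  have hmaps : MapsTo (fun y => y * q ^ 2) s s := fun y (hy : |y| ≤ |x|) => by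
    show |y * q ^ 2| ≤ |x|
    rw [abs_mul, abs_pow, abs_of_nonneg hq0]
    exact (mul_le_of_le_one_right (abs_nonneg y) (pow_le_one₀ hq0 hq1)).trans hy
  have hr : |x| ^ 2 * q ^ 3 < 1 :=
    calc |x| ^ 2 * q ^ 3 = (|x| * q) ^ 2 * q := by ring
      _ ≤ (|x| * q) ^ 2 := mul_le_of_le_one_right (by positivity) hq1
      _ < 1 := pow_lt_one₀ (by positivity) hxq two_ne_zero
  refine sub_eq_zero.mp (eq_zero_of_abs_le_mul_abs_comp (s := s)
    (f := fun y => partialTheta q y - fineSeries q y (y * q)) hmaps (by positivity) hr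
    (C := (2 + |x|) / (1 - |x| * q))
    (fun y (hy : |y| ≤ |x|) => ?_) (fun y (hy : |y| ≤ |x|) => ?_)
    (show |x| ≤ |x| from le_rfl))
  · have : 0 < 1 - |x| * q := by linarith
    have : |y| * q ≤ |x| * q := mul_le_mul_of_nonneg_right hy hq0
    calc |partialTheta q y - fineSeries q y (y * q)| ≤ (2 + |y|) / (1 - |y| * q) :=
          abs_partialTheta_sub_fineSeries_le hq0 hq1 (hs y hy)
      _ ≤ (2 + |x|) / (1 - |x| * q) := by gcongr
  · rw [partialTheta_sub_fineSeries_eq hq0 hq1 (hs y hy), abs_mul]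
    gcongr
    rw [abs_mul, abs_pow, abs_pow, abs_of_nonneg hq0]
    gcongr

end
end RogersFine

theorem gauss_trigonal_rogers_fine (q : ℝ) (hq0 : 0 ≤ q) (hq1 : q < 1) :
    ∑' n : ℕ, (-1 : ℝ) ^ n * q ^ (n * (n + 1) / 2) =
      1 + ∑' n : ℕ, (-1 : ℝ) ^ (n + 1) * q ^ (n + 1) *
        ∏ k ∈ Finset.range (n + 1), (1 + q ^ (2 * k + 1)) / (1 + q ^ (2 * k + 2)) := by
  have hxq : |(-1 : ℝ)| * q < 1 := by simpa using hq1
  have htail := RogersFine.hasSum_fineSeries_succ hq0 hq1.le hxq (t := -1 * q)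
    (by rwa [abs_mul, abs_neg, abs_one, one_mul, abs_of_nonneg hq0])
  calc ∑' n : ℕ, (-1 : ℝ) ^ n * q ^ (n * (n + 1) / 2)
      = RogersFine.fineSeries q (-1) (-1 * q) :=
        RogersFine.partialTheta_eq_fineSeries hq0 hq1.le hxq
    _ = 1 + ∑' n : ℕ, RogersFine.coeff q (-1) (n + 1) * (-1 * q) ^ (n + 1) := by
        rw [htail.tsum_eq]; ring
    _ = _ := by
        congr 1
        refine tsum_congr fun n => ?_
        simp only [RogersFine.coeff, neg_one_mul, sub_neg_eq_add]
        ring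
end

section
/- For every real q with 0 ≤ q < 1, the series ∑_{n=0}^∞ (-1)^n q^{n(n+1)/2} / ((q^2;q)_n) equals 1 - q, where (q^2;q)_n = ∏_{k=0}^{n-1}(1 - q^{2+k}). -/
/-!
Up to the factor `1 - q`, the `n`-th term is `(-1)^n q^{n(n+1)/2} / (q;q)_{n+1}`, which telescopes:
it equals `g n - g (n + 1)` for the terms `g n = (-1)^n q^{n(n+1)/2} / (q;q)_n` of Euler's series.
Since `g` is summable (the ratio of consecutive terms tends to `0`), the series sums to `g 0 = 1`.
-/

open Finset Filter Topology

/-- `(q;q)_n`. -/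
def qPochhammer {R : Type*} [CommRing R] (q : R) (n : ℕ) : R :=
  ∏ k ∈ range n, (1 - q ^ (k + 1))

theorem qPochhammer_succ {R : Type*} [CommRing R] (q : R) (n : ℕ) :
    qPochhammer q (n + 1) = qPochhammer q n * (1 - q ^ (n + 1)) :=
  prod_range_succ _ _

theorem one_sub_mul_prod_one_sub_pow_two_add {R : Type*} [CommRing R] (q : R) (n : ℕ) :
    (1 - q) * ∏ k ∈ range n, (1 - q ^ (2 + k)) = qPochhammer q (n + 1) := by
  rw [qPochhammer, prod_range_succ', mul_comm]
  simp only [zero_add, pow_one, add_comm 2, add_assoc, one_add_one_eq_two]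

theorem triangle_succ (n : ℕ) : (n + 1) * (n + 1 + 1) / 2 = n * (n + 1) / 2 + (n + 1) := by
  rw [show (n + 1) * (n + 1 + 1) = n * (n + 1) + 2 * (n + 1) by ring,
    Nat.add_mul_div_left _ _ two_pos]

section NormedField

variable {K : Type*} [NormedField K] {q : K}

theorem one_sub_pow_ne_zero (hq : ‖q‖ < 1) {k : ℕ} (hk : k ≠ 0) : 1 - q ^ k ≠ 0 := by
  refine sub_ne_zero.mpr fun h => ?_
  have : ‖q ^ k‖ < 1 := by rw [norm_pow]; exact pow_lt_one₀ (norm_nonneg q) hq hk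
  simp [← h] at this

theorem qPochhammer_ne_zero (hq : ‖q‖ < 1) (n : ℕ) : qPochhammer q n ≠ 0 :=
  prod_ne_zero_iff.mpr fun _ _ => one_sub_pow_ne_zero hq (Nat.succ_ne_zero _)

/-- Terms of Euler's series `∑ (-1)^n q^{n(n+1)/2} / (q;q)_n = (q;q)_∞`. -/
noncomputable def eulerTerm (q : K) (n : ℕ) : K :=
  (-1) ^ n * q ^ (n * (n + 1) / 2) / qPochhammer q n

theorem eulerTerm_succ (hq : ‖q‖ < 1) (n : ℕ) :
    eulerTerm q (n + 1) = -(q ^ (n + 1) / (1 - q ^ (n + 1))) * eulerTerm q n := by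
  have := qPochhammer_ne_zero hq n
  have := one_sub_pow_ne_zero hq n.succ_ne_zero
  rw [eulerTerm, eulerTerm, qPochhammer_succ, triangle_succ]
  field_simp
  ring

theorem eulerTerm_sub_eulerTerm_succ (hq : ‖q‖ < 1) (n : ℕ) :
    eulerTerm q n - eulerTerm q (n + 1) =
      (-1) ^ n * q ^ (n * (n + 1) / 2) / qPochhammer q (n + 1) := by
  have := qPochhammer_ne_zero hq n
  have := one_sub_pow_ne_zero hq n.succ_ne_zero
  rw [eulerTerm_succ hq, eulerTerm, qPochhammer_succ]
  field_simp
  ring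

theorem tendsto_pow_succ_div_one_sub_pow_succ (hq : ‖q‖ < 1) :
    Tendsto (fun n : ℕ => q ^ (n + 1) / (1 - q ^ (n + 1))) atTop (𝓝 0) := by
  have hpow : Tendsto (fun n : ℕ => q ^ (n + 1)) atTop (𝓝 0) :=
    (tendsto_pow_atTop_nhds_zero_of_norm_lt_one hq).comp (tendsto_add_atTop_nat 1)
  have hlim := hpow.div (tendsto_const_nhds (x := (1 : K)).sub hpow) (by simp)
  rwa [sub_zero, zero_div] at hlim

theorem summable_eulerTerm [CompleteSpace K] (hq : ‖q‖ < 1) : Summable (eulerTerm q) := by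
  refine summable_of_ratio_norm_eventually_le one_half_lt_one ?_
  have hsmall : ∀ᶠ n : ℕ in atTop, ‖q ^ (n + 1) / (1 - q ^ (n + 1))‖ ≤ 1 / 2 :=
    (tendsto_pow_succ_div_one_sub_pow_succ hq).norm.eventually (ge_mem_nhds (by norm_num))
  filter_upwards [hsmall] with n hn
  rw [eulerTerm_succ hq, norm_mul, norm_neg]
  exact mul_le_mul_of_nonneg_right hn (norm_nonneg _)

theorem hasSum_pow_triangle_div_qPochhammer_succ [CompleteSpace K] (hq : ‖q‖ < 1) :
    HasSum (fun n : ℕ => (-1) ^ n * q ^ (n * (n + 1) / 2) / qPochhammer q (n + 1)) 1 := by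
  have hg := (summable_eulerTerm hq).hasSum
  have hg_succ := (hasSum_nat_add_iff' 1).mpr hg
  simp only [range_one, sum_singleton] at hg_succ
  have h0 : eulerTerm q 0 = 1 := by simp [eulerTerm, qPochhammer]
  simpa [eulerTerm_sub_eulerTerm_succ hq, h0] using hg.sub hg_succ

end NormedField

theorem heine_G0_eq_one_sub (q : ℝ) (hq0 : 0 ≤ q) (hq1 : q < 1) :
    ∑' n : ℕ, (-1 : ℝ) ^ n * q ^ (n * (n + 1) / 2) /
      (∏ k ∈ Finset.range n, (1 - q ^ (2 + k))) = 1 - q := by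
  have hq : ‖q‖ < 1 := by rwa [Real.norm_of_nonneg hq0]
  have hq_ne : 1 - q ≠ 0 := by linarith
  have hterm : ∀ n : ℕ, (-1 : ℝ) ^ n * q ^ (n * (n + 1) / 2) /
      (∏ k ∈ range n, (1 - q ^ (2 + k))) =
      (1 - q) * ((-1) ^ n * q ^ (n * (n + 1) / 2) / qPochhammer q (n + 1)) := by
    intro n
    rw [← one_sub_mul_prod_one_sub_pow_two_add, mul_div_assoc', mul_div_mul_left _ _ hq_ne]
  simp_rw [hterm]
  simpa using ((hasSum_pow_triangle_div_qPochhammer_succ hq).mul_left (1 - q)).tsum_eq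
end

section
/- For real q with 0 ≤ q < 1, ∑_{n=0}^∞ q^n (q;q)_n = ∑_{n=0}^∞ (-1)^n q^{n(n+3)/2} / (q;q)_{n+1}, where (q;q)_m = ∏_{k=1}^{m}(1 - q^k). -/
open Finset Filter Topology

noncomputable section

namespace PSK

variable (q : ℝ)

/-- partial q-Pochhammer product -/
def P (n : ℕ) : ℝ := ∏ k ∈ Finset.range n, (1 - q ^ (k + 1))

/-- shifted partial product -/
def A (d m : ℕ) : ℝ := ∏ j ∈ Finset.range m, (1 - q ^ (d + 1 + j))

variable {q}

lemma P_succ (n : ℕ) : P q (n + 1) = P q n * (1 - q ^ (n + 1)) :=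
  Finset.prod_range_succ _ _

lemma A_zero_left (m : ℕ) : A q 0 m = P q m := by
  unfold A P
  exact Finset.prod_congr rfl fun j _ => by ring_nf

lemma A_succ (d m : ℕ) : A q d (m + 1) = A q d m * (1 - q ^ (d + 1 + m)) :=
  Finset.prod_range_succ _ _

lemma A_peel (d m : ℕ) : A q d (m + 1) = (1 - q ^ (d + 1)) * A q (d + 1) m := by
  unfold A
  rw [Finset.prod_range_succ', mul_comm]
  congr 1
  exact Finset.prod_congr rfl fun j _ => by ring_nf

lemma fac_le_one (hq0 : 0 ≤ q) (k : ℕ) : 1 - q ^ (k + 1) ≤ 1 := by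
  have : 0 ≤ q ^ (k + 1) := pow_nonneg hq0 _
  linarith

section
variable (hq0 : 0 ≤ q) (hq1 : q < 1)
include hq0 hq1

lemma pow_lt_one' (k : ℕ) : q ^ (k + 1) < 1 := by
  have h : q ^ (k + 1) ≤ q ^ 1 := pow_le_pow_of_le_one hq0 hq1.le (by omega)
  simp only [pow_one] at h
  exact lt_of_le_of_lt h hq1

lemma fac_pos (k : ℕ) : 0 < 1 - q ^ (k + 1) := by
  have := pow_lt_one' hq0 hq1 k; linarith

lemma P_pos (n : ℕ) : 0 < P q n :=
  Finset.prod_pos fun k _ => fac_pos hq0 hq1 k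

lemma P_le_one (n : ℕ) : P q n ≤ 1 :=
  Finset.prod_le_one (fun k _ => (fac_pos hq0 hq1 k).le) (fun k _ => fac_le_one hq0 k)

lemma ge_fac (k : ℕ) : 1 - q ≤ 1 - q ^ (k + 1) := by
  have h : q ^ (k + 1) ≤ q ^ 1 := pow_le_pow_of_le_one hq0 hq1.le (by omega)
  simp only [pow_one] at h
  linarith

lemma geo_le_P (n : ℕ) : (1 - q) ^ n ≤ P q n := by
  induction n with
  | zero => simp [P]
  | succ n ih =>
    rw [P_succ, pow_succ]
    have h1 : (0:ℝ) ≤ (1 - q) ^ n := pow_nonneg (by linarith) n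
    have h2 := ge_fac hq0 hq1 n
    nlinarith [P_pos hq0 hq1 n, fac_pos hq0 hq1 n]

lemma P_anti : Antitone (P q) := by
  apply antitone_nat_of_succ_le
  intro n
  rw [P_succ]
  nlinarith [P_pos hq0 hq1 n, fac_le_one hq0 n, fac_pos hq0 hq1 n]

lemma A_nonneg (d m : ℕ) : 0 ≤ A q d m :=
  Finset.prod_nonneg fun j _ => by
    have h : d + 1 + j = (d + j) + 1 := by omega
    rw [h]; exact (fac_pos hq0 hq1 _).le

lemma A_le_one (d m : ℕ) : A q d m ≤ 1 :=
  Finset.prod_le_one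
    (fun j _ => by
      have h : d + 1 + j = (d + j) + 1 := by omega
      rw [h]; exact (fac_pos hq0 hq1 _).le)
    (fun j _ => by
      have h : d + 1 + j = (d + j) + 1 := by omega
      rw [h]; exact fac_le_one hq0 _)

lemma one_sub_A_le (d m : ℕ) : 1 - A q d m ≤ m * q ^ (d + 1) := by
  induction m with
  | zero => simp [A]
  | succ m ih =>
    rw [A_succ]
    have h1 : q ^ (d + 1 + m) ≤ q ^ (d + 1) := pow_le_pow_of_le_one hq0 hq1.le (by omega)
    have h2 : A q d m ≤ 1 := A_le_one hq0 hq1 d m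
    have h3 : 0 ≤ A q d m := A_nonneg hq0 hq1 d m
    have h4 : 0 ≤ q ^ (d + 1 + m) := pow_nonneg hq0 _
    push_cast
    nlinarith

end

lemma nat_e_succ (n : ℕ) : n * (n + 3) / 2 + 1 = (n + 1) * (n + 1 + 1) / 2 := by
  have h1 : n * (n + 3) = n * (n + 1) + 2 * n := by ring
  have h2 : (n + 1) * (n + 1 + 1) = n * (n + 1) + 2 * (n + 1) := by ring
  have h3 : 2 ∣ n * (n + 1) := (Nat.even_mul_succ_self n).two_dvd
  omega

lemma nat_t_succ (n : ℕ) : n * (n + 1) / 2 + (n + 1) = (n + 1) * (n + 1 + 1) / 2 := by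
  have h2 : (n + 1) * (n + 1 + 1) = n * (n + 1) + 2 * (n + 1) := by ring
  have h3 : 2 ∣ n * (n + 1) := (Nat.even_mul_succ_self n).two_dvd
  omega

lemma nat_t_split (m : ℕ) : m * (m + 1) / 2 = m * (m - 1) / 2 + m := by
  cases m with
  | zero => simp
  | succ k =>
    simp only [Nat.add_sub_cancel]
    have h1 : (k + 1) * (k + 1 + 1) = k * (k + 1) + 2 * (k + 1) := by ring
    have h2 : (k + 1) * k = k * (k + 1) := by ring
    have h3 : 2 ∣ k * (k + 1) := (Nat.even_mul_succ_self k).two_dvd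
    omega

lemma nat_e_succ2 (n : ℕ) : (n + 1) * (n + 1 + 3) / 2 = n * (n + 3) / 2 + (n + 2) := by
  have h1 : (n + 1) * (n + 1 + 3) = n * (n + 3) + 2 * (n + 2) := by ring
  have h3 : 2 ∣ n * (n + 3) := by
    have h4 : n * (n + 3) = n * (n + 1) + 2 * n := by ring
    have := (Nat.even_mul_succ_self n).two_dvd
    omega
  omega

section
variable (hq0 : 0 ≤ q) (hq1 : q < 1)
include hq0 hq1

lemma tel_a (N : ℕ) : ∑ n ∈ Finset.range N, q ^ (n + 1) * P q n = 1 - P q N := by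
  induction N with
  | zero => simp [P]
  | succ N ih =>
    rw [Finset.sum_range_succ, ih, P_succ]
    ring

lemma pascal_sum (N : ℕ) :
    ∑ m ∈ Finset.range (N + 1), (-1 : ℝ) ^ m * q ^ (m * (m + 1) / 2) * A q (N + 1 - m) m / P q m
      = ∑ m ∈ Finset.range (N + 1), (-1 : ℝ) ^ m * q ^ (m * (m + 1) / 2) * A q (N - m) m / P q m
        - q ^ (N + 1) *
          ∑ k ∈ Finset.range N, (-1 : ℝ) ^ k * q ^ (k * (k + 1) / 2) * A q (N - k) k / P q k := by
  have key : ∀ k ∈ Finset.range N,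
      (-1 : ℝ) ^ (k + 1) * q ^ ((k + 1) * (k + 1 + 1) / 2) * A q (N + 1 - (k + 1)) (k + 1) /
          P q (k + 1)
        = (-1 : ℝ) ^ (k + 1) * q ^ ((k + 1) * (k + 1 + 1) / 2) * A q (N - (k + 1)) (k + 1) /
              P q (k + 1)
            - q ^ (N + 1) * ((-1 : ℝ) ^ k * q ^ (k * (k + 1) / 2) * A q (N - k) k / P q k) := by
    intro k hk
    rw [Finset.mem_range] at hk
    obtain ⟨d, rfl⟩ : ∃ d, N = k + 1 + d := ⟨N - k - 1, by omega⟩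
    have h1 : k + 1 + d + 1 - (k + 1) = d + 1 := by omega
    have h2 : k + 1 + d - (k + 1) = d := by omega
    have h3 : k + 1 + d - k = d + 1 := by omega
    rw [h1, h2, h3]
    have hA1 : A q d (k + 1) = (1 - q ^ (d + 1)) * A q (d + 1) k := A_peel d k
    have hA2 : A q (d + 1) (k + 1) = A q (d + 1) k * (1 - q ^ (d + 1 + 1 + k)) := A_succ (d + 1) k
    have hP : P q (k + 1) = P q k * (1 - q ^ (k + 1)) := P_succ k
    have e1 : q ^ ((k + 1) * (k + 1 + 1) / 2) = q ^ (k * (k + 1) / 2) * q ^ (k + 1) := by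
      rw [← pow_add, nat_t_succ]
    have e2 : q ^ (k + 1 + d + 1) = q ^ (k + 1) * q ^ (d + 1) := by
      rw [show k + 1 + d + 1 = (k + 1) + (d + 1) from by omega, pow_add]
    have e3 : q ^ (d + 1 + 1 + k) = q ^ (k + 1) * q ^ (d + 1) := by
      rw [show d + 1 + 1 + k = (k + 1) + (d + 1) from by omega, pow_add]
    have hPk : P q k ≠ 0 := (P_pos hq0 hq1 k).ne'
    have hfk : (1 : ℝ) - q ^ (k + 1) ≠ 0 := (fac_pos hq0 hq1 k).ne'
    rw [hA1, hA2, hP, e1, e2, e3]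
    field_simp
    ring
  have h1 : ∑ k ∈ Finset.range N,
        (-1 : ℝ) ^ (k + 1) * q ^ ((k + 1) * (k + 1 + 1) / 2) * A q (N + 1 - (k + 1)) (k + 1) /
          P q (k + 1)
      = (∑ k ∈ Finset.range N,
          (-1 : ℝ) ^ (k + 1) * q ^ ((k + 1) * (k + 1 + 1) / 2) * A q (N - (k + 1)) (k + 1) /
            P q (k + 1))
        - q ^ (N + 1) *
          ∑ k ∈ Finset.range N, (-1 : ℝ) ^ k * q ^ (k * (k + 1) / 2) * A q (N - k) k / P q k := by
    rw [Finset.mul_sum, ← Finset.sum_sub_distrib]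
    exact Finset.sum_congr rfl key
  simp only [Finset.sum_range_succ']
  rw [h1]
  simp [A, P]
  ring

lemma main_id (N : ℕ) :
    ∑ m ∈ Finset.range (N + 1), (-1 : ℝ) ^ m * q ^ (m * (m + 1) / 2) * A q (N - m) m / P q m
      = P q N := by
  induction N with
  | zero => simp [A, P]
  | succ N ih =>
    rw [Finset.sum_range_succ, pascal_sum hq0 hq1, ih]
    have htop : ∑ k ∈ Finset.range N, (-1 : ℝ) ^ k * q ^ (k * (k + 1) / 2) * A q (N - k) k / P q k
        = P q N - (-1 : ℝ) ^ N * q ^ (N * (N + 1) / 2) := by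
      have hs : ∑ m ∈ Finset.range (N + 1), (-1 : ℝ) ^ m * q ^ (m * (m + 1) / 2) * A q (N - m) m / P q m
          = (∑ m ∈ Finset.range N, (-1 : ℝ) ^ m * q ^ (m * (m + 1) / 2) * A q (N - m) m / P q m)
            + (-1 : ℝ) ^ N * q ^ (N * (N + 1) / 2) * A q (N - N) N / P q N :=
        Finset.sum_range_succ _ N
      rw [ih, Nat.sub_self, A_zero_left, mul_div_assoc,
        div_self (P_pos hq0 hq1 N).ne', mul_one] at hs
      linarith
    have hNt : N + 1 - (N + 1) = 0 := by omega
    rw [htop, hNt, A_zero_left, mul_div_assoc, div_self (P_pos hq0 hq1 (N + 1)).ne', mul_one,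
      P_succ, ← nat_t_succ N, pow_add]
    ring

lemma term_err (N m : ℕ) (hm : m ≤ N) :
    |(-1 : ℝ) ^ m * q ^ (m * (m + 1) / 2) / P q m
        - (-1 : ℝ) ^ m * q ^ (m * (m + 1) / 2) * A q (N - m) m / P q m|
      ≤ q ^ (N + 1) * ((m : ℝ) * q ^ (m * (m - 1) / 2) / (1 - q) ^ m) := by
  have h1q : (0 : ℝ) < 1 - q := by linarith
  have hPp := P_pos hq0 hq1 m
  have hGe := geo_le_P hq0 hq1 m
  have hGp : (0 : ℝ) < (1 - q) ^ m := pow_pos h1q m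
  have hAle := A_le_one hq0 hq1 (N - m) m
  have hAnn := A_nonneg hq0 hq1 (N - m) m
  have hsub := one_sub_A_le hq0 hq1 (N - m) m
  have habs : |(-1 : ℝ) ^ m * q ^ (m * (m + 1) / 2) / P q m
      - (-1 : ℝ) ^ m * q ^ (m * (m + 1) / 2) * A q (N - m) m / P q m|
      = q ^ (m * (m + 1) / 2) * (1 - A q (N - m) m) / P q m := by
    have hx : (-1 : ℝ) ^ m * q ^ (m * (m + 1) / 2) / P q m
        - (-1 : ℝ) ^ m * q ^ (m * (m + 1) / 2) * A q (N - m) m / P q m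
        = (-1 : ℝ) ^ m * (q ^ (m * (m + 1) / 2) * (1 - A q (N - m) m) / P q m) := by
      ring
    rw [hx, abs_mul, abs_pow, abs_neg, abs_one, one_pow, one_mul,
      abs_of_nonneg (div_nonneg (mul_nonneg (pow_nonneg hq0 _) (by linarith)) hPp.le)]
  rw [habs]
  have step1 : q ^ (m * (m + 1) / 2) * (1 - A q (N - m) m) / P q m
      ≤ q ^ (m * (m + 1) / 2) * ((m : ℝ) * q ^ (N - m + 1)) / (1 - q) ^ m := by
    apply div_le_div₀ (by positivity) ?_ hGp hGe
    exact mul_le_mul_of_nonneg_left hsub (pow_nonneg hq0 _)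
  refine step1.trans (le_of_eq ?_)
  have e1 : q ^ (m * (m + 1) / 2) = q ^ (m * (m - 1) / 2) * q ^ m := by
    rw [← pow_add, nat_t_split]
  have e2 : q ^ m * q ^ (N - m + 1) = q ^ (N + 1) := by
    rw [← pow_add]; congr 1; omega
  rw [e1]
  have e3 : q ^ (m * (m - 1) / 2) * q ^ m * ((m : ℝ) * q ^ (N - m + 1))
      = q ^ (N + 1) * ((m : ℝ) * q ^ (m * (m - 1) / 2)) := by
    rw [← e2]; ring
  rw [e3, mul_div_assoc, mul_div_assoc]

lemma err_bound (N : ℕ)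
    (hsum : Summable (fun m : ℕ => (m : ℝ) * q ^ (m * (m - 1) / 2) / (1 - q) ^ m)) :
    |∑ m ∈ Finset.range (N + 1), (-1 : ℝ) ^ m * q ^ (m * (m + 1) / 2) / P q m - P q N|
      ≤ q ^ (N + 1) * ∑' m : ℕ, ((m : ℝ) * q ^ (m * (m - 1) / 2) / (1 - q) ^ m) := by
  have h1q : (0 : ℝ) < 1 - q := by linarith
  rw [← main_id hq0 hq1 N, ← Finset.sum_sub_distrib]
  refine (Finset.abs_sum_le_sum_abs _ _).trans ?_
  have h1 : ∑ m ∈ Finset.range (N + 1),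
        |(-1 : ℝ) ^ m * q ^ (m * (m + 1) / 2) / P q m
          - (-1 : ℝ) ^ m * q ^ (m * (m + 1) / 2) * A q (N - m) m / P q m|
      ≤ ∑ m ∈ Finset.range (N + 1),
          q ^ (N + 1) * ((m : ℝ) * q ^ (m * (m - 1) / 2) / (1 - q) ^ m) :=
    Finset.sum_le_sum fun m hm =>
      term_err hq0 hq1 N m (by rw [Finset.mem_range] at hm; omega)
  refine h1.trans ?_
  rw [← Finset.mul_sum]
  refine mul_le_mul_of_nonneg_left ?_ (pow_nonneg hq0 _)
  exact Summable.sum_le_tsum _ (fun i _ =>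
    div_nonneg (mul_nonneg (Nat.cast_nonneg i) (pow_nonneg hq0 _)) (pow_nonneg h1q.le _)) hsum

lemma summable_h : Summable (fun m : ℕ => (m : ℝ) * q ^ (m * (m - 1) / 2) / (1 - q) ^ m) := by
  have h1q : (0 : ℝ) < 1 - q := by linarith
  apply summable_of_ratio_norm_eventually_le (r := 1 / 2) (by norm_num)
  have hev : ∀ᶠ m : ℕ in Filter.atTop, q ^ m < (1 - q) / 4 :=
    (tendsto_pow_atTop_nhds_zero_of_lt_one hq0 hq1).eventually_lt_const (by linarith)
  filter_upwards [hev, Filter.eventually_ge_atTop 1] with m hm hm1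
  have e1 : (m + 1) * (m + 1 - 1) / 2 = m * (m - 1) / 2 + m := by
    simp only [Nat.add_sub_cancel]
    have h2 : (m + 1) * m = m * (m + 1) := Nat.mul_comm _ _
    have := nat_t_split m
    omega
  have hXn : (0 : ℝ) ≤ q ^ (m * (m - 1) / 2) := pow_nonneg hq0 _
  have hDp : (0 : ℝ) < (1 - q) ^ m := pow_pos h1q m
  have hqm : (0 : ℝ) ≤ q ^ m := pow_nonneg hq0 m
  have hm1' : (1 : ℝ) ≤ (m : ℝ) := by exact_mod_cast hm1
  rw [Real.norm_eq_abs, Real.norm_eq_abs, e1, pow_add, pow_succ,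
    abs_of_nonneg (div_nonneg (mul_nonneg (Nat.cast_nonneg _)
      (mul_nonneg hXn hqm)) (mul_nonneg hDp.le h1q.le)),
    abs_of_nonneg (div_nonneg (mul_nonneg (Nat.cast_nonneg _) hXn) hDp.le)]
  have key : ((m : ℝ) + 1) * q ^ m ≤ 1 / 2 * (m : ℝ) * (1 - q) := by nlinarith
  have hr : (1 : ℝ) / 2 * ((m : ℝ) * q ^ (m * (m - 1) / 2) / (1 - q) ^ m)
      = (1 / 2 * (m : ℝ) * q ^ (m * (m - 1) / 2)) / (1 - q) ^ m := by ring
  rw [hr, div_le_div_iff₀ (by positivity) hDp]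
  push_cast
  nlinarith [mul_le_mul_of_nonneg_right key (mul_nonneg hXn hDp.le)]

lemma summable_c :
    Summable (fun n : ℕ => (-1 : ℝ) ^ n * q ^ (n * (n + 3) / 2) / P q (n + 1)) := by
  have h1q : (0 : ℝ) < 1 - q := by linarith
  apply summable_of_ratio_norm_eventually_le (r := 1 / 2) (by norm_num)
  have hev : ∀ᶠ n : ℕ in Filter.atTop, q ^ n < (1 - q) / 2 :=
    (tendsto_pow_atTop_nhds_zero_of_lt_one hq0 hq1).eventually_lt_const (by linarith)
  filter_upwards [hev] with n hn
  have habs : ∀ k : ℕ, ‖(-1 : ℝ) ^ k * q ^ (k * (k + 3) / 2) / P q (k + 1)‖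
      = q ^ (k * (k + 3) / 2) / P q (k + 1) := by
    intro k
    rw [Real.norm_eq_abs, abs_div, abs_mul, abs_pow, abs_neg, abs_one, one_pow, one_mul,
      abs_of_nonneg (pow_nonneg hq0 _), abs_of_nonneg (P_pos hq0 hq1 (k + 1)).le]
  rw [habs, habs]
  have e1 : (n + 1) * (n + 1 + 3) / 2 = n * (n + 3) / 2 + (n + 2) := nat_e_succ2 n
  rw [e1, pow_add, P_succ (n + 1)]
  have key : q ^ (n + 2) ≤ 1 / 2 * (1 - q ^ (n + 1 + 1)) := by
    have hge := ge_fac hq0 hq1 (n + 1)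
    have hle : q ^ (n + 2) ≤ q ^ n := pow_le_pow_of_le_one hq0 hq1.le (by omega)
    have : n + 1 + 1 = n + 2 := by omega
    rw [this]
    linarith
  have hPp := P_pos hq0 hq1 (n + 1)
  have hfp := fac_pos hq0 hq1 (n + 1)
  have hr : (1 : ℝ) / 2 * (q ^ (n * (n + 3) / 2) / P q (n + 1))
      = (1 / 2 * q ^ (n * (n + 3) / 2)) / P q (n + 1) := by ring
  rw [hr, div_le_div_iff₀ (by positivity) hPp]
  nlinarith [mul_le_mul_of_nonneg_right key
    (mul_nonneg (pow_nonneg hq0 (n * (n + 3) / 2)) hPp.le)]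

lemma tel_c (N : ℕ) :
    ∑ n ∈ Finset.range N, q * ((-1 : ℝ) ^ n * q ^ (n * (n + 3) / 2) / P q (n + 1))
      = 1 - ∑ m ∈ Finset.range (N + 1), (-1 : ℝ) ^ m * q ^ (m * (m + 1) / 2) / P q m := by
  induction N with
  | zero => simp [P]
  | succ N ih =>
    have hs : ∑ m ∈ Finset.range (N + 1 + 1), (-1 : ℝ) ^ m * q ^ (m * (m + 1) / 2) / P q m
        = (∑ m ∈ Finset.range (N + 1), (-1 : ℝ) ^ m * q ^ (m * (m + 1) / 2) / P q m)
          + (-1 : ℝ) ^ (N + 1) * q ^ ((N + 1) * (N + 1 + 1) / 2) / P q (N + 1) :=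
      Finset.sum_range_succ _ _
    rw [Finset.sum_range_succ, ih, hs]
    have e : q ^ ((N + 1) * (N + 1 + 1) / 2) = q ^ (N * (N + 3) / 2) * q := by
      rw [← nat_e_succ, pow_succ]
    rw [e]
    ring

end


end PSK

open PSK in
theorem pochhammer_series_kappa_one (q : ℝ) (hq0 : 0 ≤ q) (hq1 : q < 1) :
    ∑' n : ℕ, q ^ n * ∏ k ∈ Finset.range n, (1 - q ^ (k + 1)) =
      ∑' n : ℕ, (-1 : ℝ) ^ n * q ^ (n * (n + 3) / 2) /
        ∏ k ∈ Finset.range (n + 1), (1 - q ^ (k + 1)) := by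
  show ∑' n : ℕ, q ^ n * P q n = ∑' n : ℕ, (-1 : ℝ) ^ n * q ^ (n * (n + 3) / 2) / P q (n + 1)
  rcases eq_or_lt_of_le hq0 with hq | hq
  · -- q = 0
    subst hq
    rw [tsum_eq_single 0 (by
        intro n hn
        rw [zero_pow hn, zero_mul]),
      tsum_eq_single 0 (by
        intro n hn
        have he : n * (n + 3) / 2 ≠ 0 := by
          have : 2 ≤ n * (n + 3) := by nlinarith [Nat.one_le_iff_ne_zero.2 hn]
          omega
        rw [zero_pow he, mul_zero, zero_div])]
    simp [P]
  · -- 0 < q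
    have hsa : Summable (fun n : ℕ => q ^ n * P q n) := by
      refine Summable.of_nonneg_of_le
        (fun n => mul_nonneg (pow_nonneg hq0 _) (P_pos hq0 hq1 n).le)
        (fun n => ?_) (summable_geometric_of_lt_one hq0 hq1)
      calc q ^ n * P q n ≤ q ^ n * 1 :=
            mul_le_mul_of_nonneg_left (P_le_one hq0 hq1 n) (pow_nonneg hq0 n)
        _ = q ^ n := mul_one _
    have hsc := summable_c hq0 hq1
    have hsh := summable_h hq0 hq1
    have hPbdd : BddBelow (Set.range (P q)) := by
      refine ⟨0, ?_⟩
      rintro x ⟨n, rfl⟩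
      exact (P_pos hq0 hq1 n).le
    have hPlim : Filter.Tendsto (P q) Filter.atTop (nhds (⨅ n, P q n)) :=
      tendsto_atTop_ciInf (P_anti hq0 hq1) hPbdd
    set Pinf := ⨅ n, P q n with hPinf
    -- LHS
    have ha1 := hsa.hasSum.tendsto_sum_nat
    have ha2 := ha1.const_mul q
    have ha3 : (fun N => q * ∑ n ∈ Finset.range N, q ^ n * P q n)
        = fun N => 1 - P q N := by
      funext N
      rw [Finset.mul_sum, ← tel_a hq0 hq1 N]
      exact Finset.sum_congr rfl fun n _ => by rw [pow_succ]; ring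
    have ha4 : Filter.Tendsto (fun N => 1 - P q N) Filter.atTop (nhds (1 - Pinf)) :=
      tendsto_const_nhds.sub hPlim
    have hA : q * ∑' n : ℕ, q ^ n * P q n = 1 - Pinf := by
      refine tendsto_nhds_unique ?_ ha4
      rw [← ha3]
      exact ha2
    -- RHS
    have hqK : Filter.Tendsto
        (fun N : ℕ => q ^ (N + 1) * ∑' m : ℕ, ((m : ℝ) * q ^ (m * (m - 1) / 2) / (1 - q) ^ m))
        Filter.atTop (nhds 0) := by
      have h1 : Filter.Tendsto (fun N : ℕ => q ^ (N + 1)) Filter.atTop (nhds 0) :=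
        (tendsto_pow_atTop_nhds_zero_of_lt_one hq0 hq1).comp (Filter.tendsto_add_atTop_nat 1)
      simpa using h1.mul_const _
    have hGerr : Filter.Tendsto
        (fun N => ∑ m ∈ Finset.range (N + 1), (-1 : ℝ) ^ m * q ^ (m * (m + 1) / 2) / P q m
          - P q N) Filter.atTop (nhds 0) := by
      refine squeeze_zero_norm (fun N => ?_) hqK
      rw [Real.norm_eq_abs]
      exact err_bound hq0 hq1 N hsh
    have hGlim : Filter.Tendsto
        (fun N => ∑ m ∈ Finset.range (N + 1), (-1 : ℝ) ^ m * q ^ (m * (m + 1) / 2) / P q m)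
        Filter.atTop (nhds Pinf) := by
      have := hGerr.add hPlim
      rw [zero_add] at this
      simpa using this
    have hc1 := hsc.hasSum.tendsto_sum_nat
    have hc2 := hc1.const_mul q
    have hc3 : (fun N => q * ∑ n ∈ Finset.range N,
          (-1 : ℝ) ^ n * q ^ (n * (n + 3) / 2) / P q (n + 1))
        = fun N => 1 - ∑ m ∈ Finset.range (N + 1), (-1 : ℝ) ^ m * q ^ (m * (m + 1) / 2) / P q m := by
      funext N
      rw [Finset.mul_sum, tel_c hq0 hq1 N]
    have hc4 : Filter.Tendsto
        (fun N => 1 - ∑ m ∈ Finset.range (N + 1), (-1 : ℝ) ^ m * q ^ (m * (m + 1) / 2) / P q m)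
        Filter.atTop (nhds (1 - Pinf)) := tendsto_const_nhds.sub hGlim
    have hC : q * ∑' n : ℕ, (-1 : ℝ) ^ n * q ^ (n * (n + 3) / 2) / P q (n + 1) = 1 - Pinf := by
      refine tendsto_nhds_unique ?_ hc4
      rw [← hc3]
      exact hc2
    exact mul_left_cancel₀ (ne_of_gt hq) (hA.trans hC.symm)
end
end

section
/- For real q with 0 ≤ q < 1, ∑_{n=0}^∞ q^n (q;q^3)_n = ∑_{n=0}^∞ (-1)^n q^{n(3n+1)/2} / (q;q^3)_{n+1}, where (q;q^3)_m = ∏_{k=0}^{m-1}(1 - q^{1+3k}). -/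
/-!
With `Q = q³` and `t = -q`, the q-binomial theorem expands `(q;q³)ₙ = ∏_{k<n} (1 + t Qᵏ)` as
`∑ⱼ Q^(j choose 2) [n j]_Q tʲ`, where `[n j]_Q = qBinom Q n j` is the Gaussian binomial.
The double series `∑ₙ ∑ⱼ qⁿ Q^(j choose 2) [n j]_Q tʲ` converges absolutely since
`0 ≤ [n j]_Q ≤ (1 - Q)⁻ʲ`, so it may be summed over `n` first, where the generating function
`∑ₙ [n j]_Q xⁿ = xʲ / ∏_{k≤j} (1 - x Qᵏ)` applies. Finally `3 (j choose 2) + 2j = j(3j+1)/2`.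
-/

open Finset Filter

theorem Nat.succ_choose_two (j : ℕ) : (j + 1).choose 2 = j.choose 2 + j := by
  rw [Nat.choose_succ_succ', Nat.choose_one_right, add_comm]

theorem three_mul_choose_two_add_two_mul (j : ℕ) :
    3 * j.choose 2 + 2 * j = j * (3 * j + 1) / 2 := by
  induction j with
  | zero => rfl
  | succ j ih =>
    have h : (j + 1) * (3 * (j + 1) + 1) = j * (3 * j + 1) + 2 * (3 * j + 2) := by ring
    rw [Nat.succ_choose_two, h]
    omega

def qBinom {R : Type*} [Semiring R] (Q : R) : ℕ → ℕ → R
  | 0, 0 => 1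
  | 0, _ + 1 => 0
  | _ + 1, 0 => 1
  | n + 1, j + 1 => Q ^ (j + 1) * qBinom Q n (j + 1) + qBinom Q n j

section Semiring
variable {R : Type*} [Semiring R] (Q : R)

@[simp] theorem qBinom_zero_right : ∀ n, qBinom Q n 0 = 1
  | 0 | _ + 1 => rfl

theorem qBinom_succ_succ (n j : ℕ) :
    qBinom Q (n + 1) (j + 1) = Q ^ (j + 1) * qBinom Q n (j + 1) + qBinom Q n j := rfl

theorem qBinom_eq_zero_of_lt : ∀ {n j : ℕ}, n < j → qBinom Q n j = 0
  | 0, _ + 1, _ => rfl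
  | n + 1, j + 1, h => by
    rw [qBinom_succ_succ, qBinom_eq_zero_of_lt (by omega), qBinom_eq_zero_of_lt (by omega),
      mul_zero, add_zero]

end Semiring

theorem prod_one_add_mul_pow_eq_sum_qBinom {R : Type*} [CommSemiring R] (Q : R) (n : ℕ) (t : R) :
    ∏ k ∈ range n, (1 + t * Q ^ k) =
      ∑ j ∈ range (n + 1), Q ^ j.choose 2 * qBinom Q n j * t ^ j := by
  induction n generalizing t with
  | zero => simp
  | succ n ih =>
    have hshift : ∏ k ∈ range (n + 1), (1 + t * Q ^ k) =
        (1 + t) * ∏ k ∈ range n, (1 + t * Q * Q ^ k) := by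
      rw [prod_range_succ', pow_zero, mul_one, mul_comm]
      simp only [pow_succ', mul_assoc]
    rw [hshift, ih, add_mul, one_mul, sum_range_succ' _ (n + 1), mul_sum]
    have hlow : ∑ j ∈ range (n + 1), Q ^ j.choose 2 * qBinom Q n j * (t * Q) ^ j =
        ∑ j ∈ range (n + 1), Q ^ (j + 1).choose 2 * (Q ^ (j + 1) * qBinom Q n (j + 1)) *
          t ^ (j + 1) + 1 := by
      rw [sum_range_succ' _ n, sum_range_succ _ n, qBinom_eq_zero_of_lt Q n.lt_succ_self]
      simp only [Nat.succ_choose_two, mul_pow, Nat.choose_zero_succ, qBinom_zero_right]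
      simp only [pow_zero, mul_one, mul_zero, zero_mul, add_zero, pow_add]
      congr 1
      exact sum_congr rfl fun j _ => by ring
    have hhigh : ∀ j, t * (Q ^ j.choose 2 * qBinom Q n j * (t * Q) ^ j) =
        Q ^ (j + 1).choose 2 * qBinom Q n j * t ^ (j + 1) := fun j => by
      rw [Nat.succ_choose_two]; ring
    simp only [hlow, hhigh, qBinom_succ_succ, mul_add, add_mul, sum_add_distrib,
      Nat.choose_zero_succ, pow_zero, qBinom_zero_right, mul_one]
    ring

section Ordered
variable {K : Type*} [Field K] [LinearOrder K] [IsStrictOrderedRing K] {Q : K}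

theorem qBinom_nonneg (hQ : 0 ≤ Q) : ∀ n j, 0 ≤ qBinom Q n j
  | 0, 0 | _ + 1, 0 => zero_le_one
  | 0, _ + 1 => le_rfl
  | n + 1, j + 1 => by
    have := qBinom_nonneg hQ n (j + 1)
    have := qBinom_nonneg hQ n j
    rw [qBinom_succ_succ]
    positivity

theorem qBinom_le_inv_one_sub_pow (hQ0 : 0 ≤ Q) (hQ1 : Q < 1) :
    ∀ n j, qBinom Q n j ≤ (1 - Q)⁻¹ ^ j
  | n, 0 => by simp
  | 0, j + 1 => by
    rw [qBinom_eq_zero_of_lt Q (Nat.succ_pos j)]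
    have : 0 < 1 - Q := sub_pos.2 hQ1
    positivity
  | n + 1, j + 1 => by
    have hQpow : Q ^ (j + 1) ≤ Q := pow_le_of_le_one hQ0 hQ1.le j.succ_ne_zero
    calc qBinom Q (n + 1) (j + 1)
        ≤ Q * (1 - Q)⁻¹ ^ (j + 1) + (1 - Q)⁻¹ ^ j := by
          rw [qBinom_succ_succ]
          gcongr
          · exact qBinom_nonneg hQ0 n (j + 1)
          · exact qBinom_le_inv_one_sub_pow hQ0 hQ1 n (j + 1)
          · exact qBinom_le_inv_one_sub_pow hQ0 hQ1 n j
      _ = (1 - Q)⁻¹ ^ (j + 1) := by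
          linear_combination (-(1 - Q)⁻¹ ^ j) * inv_mul_cancel₀ (sub_pos.2 hQ1).ne'

end Ordered

section Real
variable {Q x : ℝ}

theorem summable_pow_choose_two_mul_pow (hQ0 : 0 ≤ Q) (hQ1 : Q < 1) (r : ℝ) :
    Summable fun j : ℕ => Q ^ j.choose 2 * r ^ j := by
  have hratio : Tendsto (fun j : ℕ => Q ^ j * |r|) atTop (nhds 0) := by
    simpa using (tendsto_pow_atTop_nhds_zero_of_lt_one hQ0 hQ1).mul_const |r|
  refine summable_of_ratio_norm_eventually_le (r := 1 / 2) (by norm_num) ?_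
  filter_upwards [hratio.eventually (gt_mem_nhds (by norm_num : (0 : ℝ) < 1 / 2))] with j hj
  have hstep :
      ‖Q ^ (j + 1).choose 2 * r ^ (j + 1)‖ = Q ^ j * |r| * ‖Q ^ j.choose 2 * r ^ j‖ := by
    simp only [Real.norm_eq_abs, abs_mul, abs_pow, abs_of_nonneg hQ0, Nat.succ_choose_two]
    ring
  rw [hstep]
  exact mul_le_mul_of_nonneg_right hj.le (norm_nonneg _)

theorem norm_qBinom_le (hQ0 : 0 ≤ Q) (hQ1 : Q < 1) (n j : ℕ) :
    ‖qBinom Q n j‖ ≤ (1 - Q)⁻¹ ^ j := by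
  rw [Real.norm_of_nonneg (qBinom_nonneg hQ0 n j)]
  exact qBinom_le_inv_one_sub_pow hQ0 hQ1 n j

theorem summable_pow_mul_qBinom (hQ0 : 0 ≤ Q) (hQ1 : Q < 1) (hx : |x| < 1) (j : ℕ) :
    Summable fun n : ℕ => x ^ n * qBinom Q n j := by
  refine ((summable_geometric_of_lt_one (abs_nonneg x) hx).mul_right
    ((1 - Q)⁻¹ ^ j)).of_norm_bounded fun n => ?_
  rw [norm_mul, norm_pow, Real.norm_eq_abs]
  exact mul_le_mul_of_nonneg_left (norm_qBinom_le hQ0 hQ1 n j) (by positivity)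

theorem one_sub_mul_pow_ne_zero (hQ0 : 0 ≤ Q) (hQ1 : Q < 1) (hx : |x| < 1) (k : ℕ) :
    1 - x * Q ^ k ≠ 0 := by
  have : |x * Q ^ k| < 1 := by
    rw [abs_mul, abs_pow, abs_of_nonneg hQ0]
    exact lt_of_le_of_lt (mul_le_of_le_one_right (abs_nonneg x) (pow_le_one₀ hQ0 hQ1.le)) hx
  exact sub_ne_zero.2 fun h => by rw [← h, abs_one] at this; exact lt_irrefl _ this

theorem tsum_pow_mul_qBinom (hQ0 : 0 ≤ Q) (hQ1 : Q < 1) (hx : |x| < 1) (j : ℕ) :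
    ∑' n : ℕ, x ^ n * qBinom Q n j = x ^ j / ∏ k ∈ range (j + 1), (1 - x * Q ^ k) := by
  induction j with
  | zero => simp [tsum_geometric_of_abs_lt_one hx, div_eq_mul_inv]
  | succ j ih =>
    have hrec : ∑' n : ℕ, x ^ n * qBinom Q n (j + 1) =
        x * Q ^ (j + 1) * ∑' n : ℕ, x ^ n * qBinom Q n (j + 1) +
          x * ∑' n : ℕ, x ^ n * qBinom Q n j := by
      conv_lhs => rw [(summable_pow_mul_qBinom hQ0 hQ1 hx _).tsum_eq_zero_add]
      rw [qBinom_eq_zero_of_lt Q j.succ_pos, mul_zero, zero_add, ← tsum_mul_left,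
        ← tsum_mul_left, ← ((summable_pow_mul_qBinom hQ0 hQ1 hx _).mul_left _).tsum_add
          ((summable_pow_mul_qBinom hQ0 hQ1 hx _).mul_left _)]
      exact tsum_congr fun n => by rw [qBinom_succ_succ]; ring
    have hD := one_sub_mul_pow_ne_zero hQ0 hQ1 hx (j + 1)
    have hP : ∏ k ∈ range (j + 1), (1 - x * Q ^ k) ≠ 0 :=
      prod_ne_zero_iff.2 fun k _ => one_sub_mul_pow_ne_zero hQ0 hQ1 hx k
    rw [ih] at hrec
    rw [prod_range_succ, eq_div_iff (mul_ne_zero hP hD)]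
    field_simp at hrec
    linear_combination hrec

theorem tsum_pow_mul_prod_one_add_mul_pow (hQ0 : 0 ≤ Q) (hQ1 : Q < 1) (hx : |x| < 1) (t : ℝ) :
    ∑' n : ℕ, x ^ n * ∏ k ∈ range n, (1 + t * Q ^ k) =
      ∑' j : ℕ, Q ^ j.choose 2 * t ^ j * x ^ j / ∏ k ∈ range (j + 1), (1 - x * Q ^ k) := by
  set f : ℕ → ℕ → ℝ := fun n j => x ^ n * qBinom Q n j * (Q ^ j.choose 2 * t ^ j) with hf
  have hrow (n : ℕ) : ∑' j, f n j = x ^ n * ∏ k ∈ range n, (1 + t * Q ^ k) := by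
    rw [tsum_eq_sum (s := range (n + 1)) fun j hj => by
        simp [hf, qBinom_eq_zero_of_lt Q (show n < j by simpa using hj)],
      prod_one_add_mul_pow_eq_sum_qBinom, mul_sum]
    exact sum_congr rfl fun j _ => by ring
  have hcol (j : ℕ) : ∑' n, f n j =
      Q ^ j.choose 2 * t ^ j * x ^ j / ∏ k ∈ range (j + 1), (1 - x * Q ^ k) := by
    rw [hf, tsum_mul_right, tsum_pow_mul_qBinom hQ0 hQ1 hx]
    ring
  have hsummable : Summable (Function.uncurry f) := by
    refine ((summable_geometric_of_lt_one (abs_nonneg x) hx).mul_of_nonneg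
      (summable_pow_choose_two_mul_pow hQ0 hQ1 (|t| * (1 - Q)⁻¹)) (fun n => by positivity)
      (fun j => by have := (sub_pos.2 hQ1).le; positivity)).of_norm_bounded fun ⟨n, j⟩ => ?_
    simp only [Function.uncurry, hf, norm_mul, norm_pow, Real.norm_eq_abs, abs_of_nonneg hQ0]
    calc |x| ^ n * |qBinom Q n j| * (Q ^ j.choose 2 * |t| ^ j)
        = |x| ^ n * (Q ^ j.choose 2 * |t| ^ j) * |qBinom Q n j| := by ring
      _ ≤ |x| ^ n * (Q ^ j.choose 2 * |t| ^ j) * (1 - Q)⁻¹ ^ j := by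
        gcongr
        exact norm_qBinom_le hQ0 hQ1 n j
      _ = |x| ^ n * (Q ^ j.choose 2 * (|t| * (1 - Q)⁻¹) ^ j) := by ring
  simp_rw [← hrow, ← hcol]
  exact hsummable.tsum_comm.symm

end Real

theorem pochhammer_series_kappa_three (q : ℝ) (hq0 : 0 ≤ q) (hq1 : q < 1) :
    ∑' n : ℕ, q ^ n * ∏ k ∈ Finset.range n, (1 - q ^ (1 + 3 * k)) =
      ∑' n : ℕ, (-1 : ℝ) ^ n * q ^ (n * (3 * n + 1) / 2) /
        ∏ k ∈ Finset.range (n + 1), (1 - q ^ (1 + 3 * k)) := by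
  have hfactor (k : ℕ) : q ^ (1 + 3 * k) = q * (q ^ 3) ^ k := by rw [pow_add, pow_one, pow_mul]
  have hexp (j : ℕ) :
      (q ^ 3) ^ j.choose 2 * (-q) ^ j * q ^ j = (-1) ^ j * q ^ (j * (3 * j + 1) / 2) := by
    rw [← three_mul_choose_two_add_two_mul, neg_pow, pow_add, pow_mul, two_mul, pow_add]
    ring
  calc ∑' n : ℕ, q ^ n * ∏ k ∈ range n, (1 - q ^ (1 + 3 * k))
      = ∑' n : ℕ, q ^ n * ∏ k ∈ range n, (1 + -q * (q ^ 3) ^ k) := by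
        simp only [hfactor, neg_mul, ← sub_eq_add_neg]
    _ = ∑' j : ℕ, (q ^ 3) ^ j.choose 2 * (-q) ^ j * q ^ j /
          ∏ k ∈ range (j + 1), (1 - q * (q ^ 3) ^ k) :=
        tsum_pow_mul_prod_one_add_mul_pow (by positivity) (pow_lt_one₀ hq0 hq1 three_ne_zero)
          (abs_lt.2 ⟨by linarith, hq1⟩) (-q)
    _ = _ := by simp only [hexp, hfactor]
end

section
/- For every positive integer κ and real q with 0 ≤ q < 1, ∑_{n=0}^∞ q^n (q;q^κ)_n = ∑_{n=0}^∞ (-1)^n q^{n(κn + 4 - κ)/2} / (q;q^κ)_{n+1}, where (q;q^κ)_m = ∏_{k=0}^{m-1}(1 - q^{1+κk}). -/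
open Filter Finset

namespace PochGK

variable (κ : ℕ) (q : ℝ)

/-- partial product (q; q^κ)_m -/
noncomputable def D (m : ℕ) : ℝ := ∏ k ∈ Finset.range m, (1 - q ^ (1 + κ * k))

/-- term of the left-hand series, with parameter shift j -/
noncomputable def f (j n : ℕ) : ℝ :=
  q ^ n * ∏ k ∈ Finset.range n, (1 - q ^ (1 + κ * (j + k)))

/-- exponent appearing in right-hand series -/
def E (j n : ℕ) : ℕ := 2 * n + κ * (j * n + n.choose 2)

/-- term of the right-hand series with parameter shift j -/
noncomputable def g (j n : ℕ) : ℝ := (-1) ^ n * q ^ E κ j n / D κ q (n + 1)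

noncomputable def F (j : ℕ) : ℝ := ∑' n, f κ q j n
noncomputable def G (j : ℕ) : ℝ := ∑' n, g κ q j n

variable {κ q}
variable (hκ : 0 < κ) (hq0 : 0 ≤ q) (hq1 : q < 1)

section basic
include hq0 hq1
set_option linter.unusedSectionVars false

lemma pow_le_q (m : ℕ) (hm : m ≠ 0) : q ^ m ≤ q := pow_le_of_le_one hq0 hq1.le hm

lemma factor_pos (m : ℕ) (hm : m ≠ 0) : 0 < 1 - q ^ m := by
  have := pow_le_q hq0 hq1 m hm; linarith

omit hq1 in
lemma factor_le_one (m : ℕ) : 1 - q ^ m ≤ 1 := by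
  have : 0 ≤ q ^ m := pow_nonneg hq0 m; linarith

lemma D_pos (m : ℕ) : 0 < D κ q m := by
  apply Finset.prod_pos
  intro k _
  exact factor_pos hq0 hq1 _ (by omega)

lemma D_le_one (m : ℕ) : D κ q m ≤ 1 := by
  apply Finset.prod_le_one
  · intro k _; exact (factor_pos hq0 hq1 _ (by omega)).le
  · intro k _; exact factor_le_one hq0 _

end basic

lemma D_succ (m : ℕ) : D κ q (m + 1) = D κ q m * (1 - q ^ (1 + κ * m)) :=
  Finset.prod_range_succ _ _

lemma E_zero (j : ℕ) : E κ j 0 = 0 := by simp [E]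

lemma E_succ (j n : ℕ) : E κ j (n + 1) = E κ j n + (2 + κ * (j + n)) := by
  simp [E, Nat.choose_succ_succ, Nat.choose_one_right]; ring

lemma E_shift (j n : ℕ) : E κ j (n + 1) = E κ (j + 1) n + (2 + κ * j) := by
  simp [E, Nat.choose_succ_succ, Nat.choose_one_right]; ring

lemma E_mono (j n : ℕ) : E κ 0 n ≤ E κ j n := by
  have : n.choose 2 ≤ j*n + n.choose 2 := Nat.le_add_left _ _
  simp only [E, Nat.zero_mul, Nat.zero_add]
  exact Nat.add_le_add_left (Nat.mul_le_mul_left κ this) _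


section sums
include hκ hq0 hq1
set_option linter.unusedSectionVars false

lemma P_nonneg (j n : ℕ) : 0 ≤ ∏ k ∈ Finset.range n, (1 - q ^ (1 + κ * (j + k))) :=
  Finset.prod_nonneg fun k _ => (factor_pos hq0 hq1 _ (by omega)).le

lemma P_le_one (j n : ℕ) : ∏ k ∈ Finset.range n, (1 - q ^ (1 + κ * (j + k))) ≤ 1 :=
  Finset.prod_le_one (fun k _ => (factor_pos hq0 hq1 _ (by omega)).le)
    (fun k _ => factor_le_one hq0 _)

lemma f_nonneg (j n : ℕ) : 0 ≤ f κ q j n :=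
  mul_nonneg (pow_nonneg hq0 n) (P_nonneg hκ hq0 hq1 j n)

lemma f_le_pow (j n : ℕ) : f κ q j n ≤ q ^ n := by
  have := P_le_one hκ hq0 hq1 j n
  have h2 := pow_nonneg hq0 n
  calc f κ q j n ≤ q ^ n * 1 := mul_le_mul_of_nonneg_left this h2
    _ = q ^ n := mul_one _

lemma summable_f (j : ℕ) : Summable (f κ q j) :=
  Summable.of_nonneg_of_le (f_nonneg hκ hq0 hq1 j) (f_le_pow hκ hq0 hq1 j)
    (summable_geometric_of_lt_one hq0 hq1)

lemma F_nonneg (j : ℕ) : 0 ≤ F κ q j := tsum_nonneg (f_nonneg hκ hq0 hq1 j)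

lemma F_le (j : ℕ) : F κ q j ≤ (1 - q)⁻¹ := by
  have h := tsum_geometric_of_lt_one hq0 hq1
  calc F κ q j ≤ ∑' n : ℕ, q ^ n :=
        Summable.tsum_le_tsum (f_le_pow hκ hq0 hq1 j) (summable_f hκ hq0 hq1 j)
          (summable_geometric_of_lt_one hq0 hq1)
    _ = (1 - q)⁻¹ := h

lemma norm_g (j n : ℕ) : ‖g κ q j n‖ = q ^ E κ j n / D κ q (n + 1) := by
  rw [g, norm_div, norm_mul, norm_pow, norm_neg, norm_one, one_pow, one_mul,
    Real.norm_eq_abs, Real.norm_eq_abs, abs_of_nonneg (pow_nonneg hq0 _),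
    abs_of_nonneg (D_pos hq0 hq1 _).le]

lemma summable_g (j : ℕ) : Summable (g κ q j) := by
  apply summable_of_ratio_norm_eventually_le (r := 1/2) (by norm_num)
  have hq' : (0:ℝ) < 1 - q := by linarith
  have h0 : Tendsto (fun n : ℕ => q ^ n) atTop (nhds 0) :=
    tendsto_pow_atTop_nhds_zero_of_lt_one hq0 hq1
  have hev : ∀ᶠ n : ℕ in atTop, q ^ n ≤ (1 - q)/2 :=
    h0.eventually_le_const (by positivity)
  filter_upwards [hev] with n hn
  rw [norm_g hκ hq0 hq1, norm_g hκ hq0 hq1, E_succ, pow_add, D_succ]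
  have hD := D_pos (κ := κ) hq0 hq1 (n + 1)
  have hfac := factor_pos hq0 hq1 (1 + κ * (n+1)) (by omega)
  have hfac2 : 1 - q ≤ 1 - q ^ (1 + κ * (n+1)) := by
    have := pow_le_q hq0 hq1 (1 + κ * (n+1)) (by omega); linarith
  have hqc : q ^ (2 + κ * (j + n)) ≤ (1 - q)/2 := by
    calc q ^ (2 + κ * (j + n)) ≤ q ^ n := by
          apply pow_le_pow_of_le_one hq0 hq1.le
          have : n ≤ κ * (j + n) := le_trans (by nlinarith [Nat.le_add_left n j] : n ≤ 1 * (j+n))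
            (Nat.mul_le_mul_right _ hκ)
          omega
      _ ≤ (1 - q)/2 := hn
  calc q ^ E κ j n * q ^ (2 + κ * (j + n)) / (D κ q (n+1) * (1 - q ^ (1 + κ * (n+1))))
      ≤ q ^ E κ j n * ((1-q)/2) / (D κ q (n+1) * (1 - q)) := by
        gcongr
    _ = 1/2 * (q ^ E κ j n / D κ q (n+1)) := by
        field_simp

lemma summable_abs_g (j : ℕ) : Summable (fun n => ‖g κ q j n‖) :=
  (summable_g hκ hq0 hq1 j).abs

lemma G_le (j : ℕ) : ‖G κ q j‖ ≤ ∑' n, ‖g κ q 0 n‖ := by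
  calc ‖G κ q j‖ ≤ ∑' n, ‖g κ q j n‖ := norm_tsum_le_tsum_norm (summable_abs_g hκ hq0 hq1 j)
    _ ≤ ∑' n, ‖g κ q 0 n‖ := by
        apply Summable.tsum_le_tsum _ (summable_abs_g hκ hq0 hq1 j) (summable_abs_g hκ hq0 hq1 0)
        intro n
        rw [norm_g hκ hq0 hq1, norm_g hκ hq0 hq1]
        have h1 : q ^ E κ j n ≤ q ^ E κ 0 n := pow_le_pow_of_le_one hq0 hq1.le (E_mono j n)
        exact (div_le_div_iff_of_pos_right (D_pos hq0 hq1 _)).mpr h1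


lemma recF (j : ℕ) : F κ q j = 1 + (q * (1 - q ^ (1 + κ * j))) * F κ q (j + 1) := by
  rw [F, Summable.tsum_eq_zero_add (summable_f hκ hq0 hq1 j)]
  have h0 : f κ q j 0 = 1 := by simp [f]
  have h1 : ∀ n, f κ q j (n + 1) = (q * (1 - q ^ (1 + κ * j))) * f κ q (j + 1) n := by
    intro n
    rw [f, f, Finset.prod_range_succ']
    rw [Finset.prod_congr rfl (fun k _ => by
      rw [show j + (k + 1) = (j + 1) + k from by omega] : ∀ k ∈ Finset.range n,
        (1 - q ^ (1 + κ * (j + (k + 1)))) = (1 - q ^ (1 + κ * ((j + 1) + k)))), pow_succ]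
    ring
  rw [h0]
  congr 1
  rw [tsum_congr h1, tsum_mul_left, F]

lemma recG (j : ℕ) : G κ q j = 1 + (q * (1 - q ^ (1 + κ * j))) * G κ q (j + 1) := by
  have hsg := summable_g hκ hq0 hq1 (j + 1)
  have hsv : Summable (fun n => q * g κ q (j + 1) n) := hsg.mul_left q
  have hsu : Summable (fun n => g κ q j n - q * g κ q (j + 1) n) :=
    (summable_g hκ hq0 hq1 j).sub hsv
  have hsplit : ∀ n, g κ q j n = (g κ q j n - q * g κ q (j + 1) n) + q * g κ q (j + 1) n :=
    fun n => by ring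
  have hq' : (0:ℝ) < 1 - q := by linarith
  -- value of u 0
  have hD1 : D κ q 1 = 1 - q := by simp [D]
  have hu0 : g κ q j 0 - q * g κ q (j + 1) 0 = 1 := by
    rw [g, g, E_zero, E_zero, hD1]
    field_simp
  -- u (n+1) = -q^(2+κ j) * g (j+1) n
  have hu1 : ∀ n, g κ q j (n + 1) - q * g κ q (j + 1) (n + 1)
      = (-(q ^ (2 + κ * j))) * g κ q (j + 1) n := by
    intro n
    have hDp := D_pos (κ := κ) hq0 hq1 (n + 1)
    have hDp2 := D_pos (κ := κ) hq0 hq1 (n + 2)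
    have hfac := factor_pos hq0 hq1 (1 + κ * (n + 1)) (by omega)
    rw [g, g, g, E_shift j n, E_succ (j+1) n, D_succ (m := n + 1)]
    field_simp
    ring
  -- assemble
  rw [G, tsum_congr hsplit, Summable.tsum_add hsu hsv, Summable.tsum_eq_zero_add hsu, hu0,
    tsum_congr hu1, tsum_mul_left, tsum_mul_left]
  rw [show (1:ℝ) + q * (1 - q ^ (1 + κ * j)) * G κ q (j+1)
      = 1 + (-(q ^ (2 + κ * j)) * G κ q (j+1) + q * G κ q (j+1)) from by
    rw [show 2 + κ * j = 1 + (1 + κ * j) from by ring, pow_add, pow_one]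
    ring]
  rw [G]
  ring


lemma key (N : ℕ) : F κ q 0 - G κ q 0
    = (∏ j ∈ Finset.range N, (q * (1 - q ^ (1 + κ * j)))) * (F κ q N - G κ q N) := by
  induction N with
  | zero => simp
  | succ N ih =>
    rw [ih, Finset.prod_range_succ, recF hκ hq0 hq1 N, recG hκ hq0 hq1 N]
    ring

lemma F_eq_G : F κ q 0 = G κ q 0 := by
  set C : ℝ := (1 - q)⁻¹ + ∑' n, ‖g κ q 0 n‖ with hCdef
  have hq' : (0:ℝ) < 1 - q := by linarith
  have hC : 0 ≤ C := by
    rw [hCdef]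
    have h1 : (0:ℝ) ≤ (1 - q)⁻¹ := by positivity
    have h2 : (0:ℝ) ≤ ∑' n, ‖g κ q 0 n‖ := tsum_nonneg fun n => norm_nonneg _
    exact add_nonneg h1 h2
  have hbound : ∀ N, |F κ q 0 - G κ q 0| ≤ q ^ N * C := by
    intro N
    rw [key hκ hq0 hq1 N, abs_mul]
    have h1 : |∏ j ∈ Finset.range N, (q * (1 - q ^ (1 + κ * j)))| ≤ q ^ N := by
      rw [Finset.abs_prod]
      calc ∏ j ∈ Finset.range N, |q * (1 - q ^ (1 + κ * j))|
          ≤ ∏ j ∈ Finset.range N, q := by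
            apply Finset.prod_le_prod (fun j _ => abs_nonneg _)
            intro j _
            rw [abs_mul, abs_of_nonneg hq0,
              abs_of_nonneg (factor_pos hq0 hq1 _ (by omega)).le]
            nlinarith [mul_nonneg hq0 (pow_nonneg hq0 (1 + κ * j))]
        _ = q ^ N := by rw [Finset.prod_const, Finset.card_range]
    have h2 : |F κ q N - G κ q N| ≤ C := by
      have hF : |F κ q N| ≤ (1 - q)⁻¹ := by
        rw [abs_of_nonneg (F_nonneg hκ hq0 hq1 N)]; exact F_le hκ hq0 hq1 N
      have hG : |G κ q N| ≤ ∑' n, ‖g κ q 0 n‖ := G_le hκ hq0 hq1 N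
      calc |F κ q N - G κ q N| ≤ |F κ q N| + |G κ q N| := abs_sub _ _
        _ ≤ C := by rw [hCdef]; exact add_le_add hF hG
    exact mul_le_mul h1 h2 (abs_nonneg _) (pow_nonneg hq0 N)
  have htend : Tendsto (fun N : ℕ => q ^ N * C) atTop (nhds 0) := by
    have := (tendsto_pow_atTop_nhds_zero_of_lt_one hq0 hq1).mul_const C
    simpa using this
  have hle : |F κ q 0 - G κ q 0| ≤ 0 := ge_of_tendsto' htend hbound
  have hge := abs_nonneg (F κ q 0 - G κ q 0)
  have h0 : |F κ q 0 - G κ q 0| = 0 := le_antisymm hle hge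
  have hz := abs_eq_zero.mp h0
  linarith

end sums

lemma expo (κ n : ℕ) : n * (κ * n + 4 - κ) / 2 = 2 * n + κ * Nat.choose n 2 := by
  rcases n with _ | m
  · simp
  · have h1 : κ * (m + 1) + 4 - κ = κ * m + 4 := by
      rw [Nat.mul_succ]; omega
    rw [h1, Nat.choose_two_right]
    simp only [Nat.add_sub_cancel]
    obtain ⟨c, hc⟩ := Nat.even_mul_succ_self m
    have h2 : (m + 1) * (κ * m + 4) = 2 * (2 * (m + 1) + κ * c) := by
      have h3 : (m + 1) * (κ * m + 4) = κ * (m * (m + 1)) + 4 * (m + 1) := by ring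
      rw [h3, hc]; ring
    have h4 : (m + 1) * m / 2 = c := by
      have : (m + 1) * m = 2 * c := by rw [Nat.mul_comm]; omega
      omega
    rw [h2, h4, Nat.mul_div_cancel_left _ (by norm_num : 0 < 2)]

end PochGK

theorem pochhammer_series_general_kappa (κ : ℕ) (hκ : 0 < κ) (q : ℝ)
    (hq0 : 0 ≤ q) (hq1 : q < 1) :
    ∑' n : ℕ, q ^ n * ∏ k ∈ Finset.range n, (1 - q ^ (1 + κ * k)) =
      ∑' n : ℕ, (-1 : ℝ) ^ n * q ^ (n * (κ * n + 4 - κ) / 2) /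
        ∏ k ∈ Finset.range (n + 1), (1 - q ^ (1 + κ * k)) := by
  have h := PochGK.F_eq_G hκ hq0 hq1
  have hL : PochGK.F κ q 0 = ∑' n : ℕ, q ^ n * ∏ k ∈ Finset.range n, (1 - q ^ (1 + κ * k)) := by
    rw [PochGK.F]
    exact tsum_congr fun n => by simp [PochGK.f]
  have hR : PochGK.G κ q 0 = ∑' n : ℕ, (-1 : ℝ) ^ n * q ^ (n * (κ * n + 4 - κ) / 2) /
      ∏ k ∈ Finset.range (n + 1), (1 - q ^ (1 + κ * k)) := by
    rw [PochGK.G]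
    refine tsum_congr fun n => ?_
    rw [PochGK.g, PochGK.D, PochGK.E, PochGK.expo]
    simp
  rw [← hL, ← hR, h]
end

section
/- For real q with 0 ≤ q < 1, ∑_{n=0}^∞ (-1)^n q^{n^2} = 1 + ∑_{n=1}^∞ (-1)^n q^n · ∏_{k=0}^{n-1} (1+q^{4k+1})/(1+q^{4k+3}). -/
open Finset Filter Topology

namespace SquareSeriesAux

noncomputable def PP (q x : ℝ) (n : ℕ) : ℝ :=
  ∏ k ∈ Finset.range n, (1 + x * q ^ (4 * k)) / (1 + x * q ^ (4 * k + 2))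

noncomputable def AA (q x : ℝ) (n : ℕ) : ℝ := (-1) ^ n * x ^ n * PP q x n

noncomputable def HH (q x : ℝ) : ℝ := ∑' n, AA q x n

noncomputable def CC (q : ℝ) : ℝ := Real.exp ((1 - q ^ 4)⁻¹)

noncomputable def VV (q x : ℝ) (n : ℕ) : ℝ :=
  (-1) ^ n * (1 - x + x ^ 2 * (1 - q ^ (4 * n)) / (1 + x)) * (x ^ n * PP q x n)

lemma CC_pos (q : ℝ) : 0 < CC q := Real.exp_pos _

lemma PP_nonneg {q x : ℝ} (hq0 : 0 ≤ q) (hx0 : 0 ≤ x) (n : ℕ) : 0 ≤ PP q x n :=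
  Finset.prod_nonneg fun k _ => div_nonneg (by positivity) (by positivity)

lemma PP_le {q x : ℝ} (hq0 : 0 ≤ q) (hq1 : q < 1) (hx0 : 0 ≤ x) (hx1 : x ≤ 1) (n : ℕ) :
    PP q x n ≤ CC q := by
  have hq4 : q ^ 4 < 1 := pow_lt_one₀ hq0 hq1 (by norm_num)
  have h1 : PP q x n ≤ ∏ k ∈ Finset.range n, Real.exp (q ^ (4 * k)) := by
    apply Finset.prod_le_prod
    · intro k _; exact div_nonneg (by positivity) (by positivity)
    · intro k _
      have hd : (1:ℝ) ≤ 1 + x * q ^ (4*k+2) := le_add_of_nonneg_right (by positivity)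
      have hp : (0:ℝ) ≤ q ^ (4*k) := by positivity
      calc (1 + x * q ^ (4 * k)) / (1 + x * q ^ (4 * k + 2))
          ≤ 1 + x * q ^ (4*k) := div_le_self (by positivity) hd
        _ ≤ 1 + q ^ (4*k) := by nlinarith
        _ ≤ Real.exp (q ^ (4*k)) := by
            have := Real.add_one_le_exp (q ^ (4*k)); linarith
  rw [← Real.exp_sum] at h1
  apply h1.trans
  rw [CC, Real.exp_le_exp]
  have h2 : ∑ k ∈ Finset.range n, q ^ (4 * k) = ∑ k ∈ Finset.range n, (q ^ 4) ^ k := by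
    refine Finset.sum_congr rfl fun k _ => ?_
    rw [← pow_mul]
  rw [h2]
  have h3 := Summable.sum_le_tsum (Finset.range n) (fun i _ => by positivity)
    (summable_geometric_of_lt_one (by positivity) hq4)
  rw [tsum_geometric_of_lt_one (by positivity) hq4] at h3
  exact h3

lemma abs_AA_le {q x : ℝ} (hq0 : 0 ≤ q) (hq1 : q < 1) (hx0 : 0 ≤ x) (hx1 : x < 1) (n : ℕ) :
    |AA q x n| ≤ CC q * x ^ n := by
  have h1 : |AA q x n| = x ^ n * PP q x n := by
    rw [AA, abs_mul, abs_mul, abs_pow, abs_neg, abs_one, one_pow, one_mul,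
      abs_of_nonneg (pow_nonneg hx0 n), abs_of_nonneg (PP_nonneg hq0 hx0 n)]
  rw [h1, mul_comm (CC q) (x ^ n)]
  exact mul_le_mul_of_nonneg_left (PP_le hq0 hq1 hx0 hx1.le n) (pow_nonneg hx0 n)

lemma summable_AA {q x : ℝ} (hq0 : 0 ≤ q) (hq1 : q < 1) (hx0 : 0 ≤ x) (hx1 : x < 1) :
    Summable (AA q x) := by
  apply Summable.of_norm
  apply Summable.of_nonneg_of_le (fun n => norm_nonneg _)
    (fun n => by simpa [Real.norm_eq_abs] using abs_AA_le hq0 hq1 hx0 hx1 n)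
  exact (summable_geometric_of_lt_one hx0 hx1).mul_left _

lemma HH_bound {q x : ℝ} (hq0 : 0 ≤ q) (hq1 : q < 1) (hx0 : 0 ≤ x) (hx1 : x < 1) :
    |HH q x| ≤ CC q * (1 - x)⁻¹ := by
  have hs : Summable fun n => ‖AA q x n‖ := by
    apply Summable.of_nonneg_of_le (fun n => norm_nonneg _)
      (fun n => by simpa [Real.norm_eq_abs] using abs_AA_le hq0 hq1 hx0 hx1 n)
    exact (summable_geometric_of_lt_one hx0 hx1).mul_left _
  have h1 : ‖HH q x‖ ≤ ∑' n, ‖AA q x n‖ := norm_tsum_le_tsum_norm hs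
  have h2 : ∑' n, ‖AA q x n‖ ≤ ∑' n, CC q * x ^ n := by
    apply Summable.tsum_le_tsum _ hs ((summable_geometric_of_lt_one hx0 hx1).mul_left _)
    intro n
    simpa [Real.norm_eq_abs] using abs_AA_le hq0 hq1 hx0 hx1 n
  rw [tsum_mul_left, tsum_geometric_of_lt_one hx0 hx1] at h2
  calc |HH q x| = ‖HH q x‖ := (Real.norm_eq_abs _).symm
    _ ≤ _ := h1.trans h2

lemma PP_succ (q x : ℝ) (n : ℕ) :
    PP q x (n + 1) = PP q x n * ((1 + x * q ^ (4 * n)) / (1 + x * q ^ (4 * n + 2))) := by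
  rw [PP, Finset.prod_range_succ]; rfl

lemma PP_shift {q x : ℝ} (hq0 : 0 ≤ q) (hx0 : 0 ≤ x) (n : ℕ) :
    PP q (x * q ^ 4) n * (1 + x) = PP q x (n + 1) * (1 + x * q ^ 2) := by
  have hd : (0:ℝ) < 1 + x * q ^ 2 := by positivity
  have h1 : PP q x (n + 1)
      = (∏ k ∈ Finset.range n, (1 + x * q ^ (4 * (k+1))) / (1 + x * q ^ (4 * (k+1) + 2)))
        * ((1 + x * q ^ (4*0)) / (1 + x * q ^ (4*0 + 2))) := by
    rw [PP, Finset.prod_range_succ']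
  have h2 : PP q (x * q ^ 4) n
      = ∏ k ∈ Finset.range n, (1 + x * q ^ (4 * (k+1))) / (1 + x * q ^ (4 * (k+1) + 2)) := by
    refine Finset.prod_congr rfl fun k _ => ?_
    have e1 : 4 * (k + 1) = (4 * k) + 4 := by ring
    rw [e1, show 4 * k + 4 + 2 = (4 * k + 2) + 4 from by ring, pow_add, pow_add]; ring
  rw [h1, h2]
  field_simp
  ring

lemma key_telescope {q x : ℝ} (hq0 : 0 ≤ q) (hx0 : 0 ≤ x) (n : ℕ) :
    AA q x n - x ^ 2 * q ^ 2 * AA q (x * q ^ 4) n = VV q x n - VV q x (n + 1) := by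
  have hx1p : (0:ℝ) < 1 + x := by positivity
  have hd1 : (0:ℝ) < 1 + x * q ^ 2 := by positivity
  have e0 : PP q (x * q ^ 4) n = PP q x (n + 1) * (1 + x * q ^ 2) / (1 + x) := by
    rw [eq_div_iff (ne_of_gt hx1p)]; exact PP_shift hq0 hx0 n
  rw [AA, AA, VV, VV, e0, PP_succ, mul_pow, ← pow_mul,
    show 4 * (n + 1) = 4 * n + 4 from by ring, pow_add q (4*n) 4, pow_add q (4*n) 2,
    pow_succ x n, pow_succ (-1 : ℝ) n]
  have hw0 : (0:ℝ) ≤ q ^ (4 * n) := by positivity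
  set w := q ^ (4 * n) with hw
  have hd3 : (0:ℝ) < 1 + x * (w * q ^ 2) := by positivity
  field_simp
  ring


lemma FE4 {q x : ℝ} (hq0 : 0 ≤ q) (hq1 : q < 1) (hx0 : 0 ≤ x) (hx1 : x < 1) :
    HH q x = 1 - x + x ^ 2 * q ^ 2 * HH q (x * q ^ 4) := by
  have hq4le : q ^ 4 ≤ 1 := pow_le_one₀ hq0 hq1.le
  have hy0 : 0 ≤ x * q ^ 4 := by positivity
  have hyx : x * q ^ 4 ≤ x := by nlinarith [pow_nonneg hq0 4]
  have hy1 : x * q ^ 4 < 1 := lt_of_le_of_lt hyx hx1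
  have hsA : Summable (AA q x) := summable_AA hq0 hq1 hx0 hx1
  have hsB : Summable (fun n => x ^ 2 * q ^ 2 * AA q (x * q ^ 4) n) :=
    (summable_AA hq0 hq1 hy0 hy1).mul_left _
  -- the certificate tends to zero
  have hVlim : Tendsto (fun N => VV q x N) atTop (𝓝 0) := by
    refine squeeze_zero_norm (a := fun N => 2 * CC q * x ^ N) (fun N => ?_) ?_
    ·
      have hw1 : q ^ (4 * N) ≤ 1 := pow_le_one₀ hq0 hq1.le
      have hw0 : (0:ℝ) ≤ q ^ (4 * N) := by positivity
      have hx1p : (0:ℝ) < 1 + x := by positivity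
      have hfrac0 : 0 ≤ x ^ 2 * (1 - q ^ (4 * N)) / (1 + x) :=
        div_nonneg (mul_nonneg (by positivity) (by linarith)) (by linarith)
      have hrr0 : 0 ≤ 1 - x + x ^ 2 * (1 - q ^ (4 * N)) / (1 + x) := by linarith
      have hrr2 : 1 - x + x ^ 2 * (1 - q ^ (4 * N)) / (1 + x) ≤ 2 := by
        have h2 : x ^ 2 * (1 - q ^ (4 * N)) ≤ 1 + x := by nlinarith
        have h3 := (div_le_one hx1p).mpr h2
        linarith
      have hPN := PP_le hq0 hq1 hx0 hx1.le N
      have hPN0 := PP_nonneg hq0 hx0 N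
      have hxN : (0:ℝ) ≤ x ^ N := pow_nonneg hx0 N
      have e1 : ‖VV q x N‖
          = (1 - x + x ^ 2 * (1 - q ^ (4 * N)) / (1 + x)) * (x ^ N * PP q x N) := by
        rw [VV, Real.norm_eq_abs, abs_mul, abs_mul, abs_pow, abs_neg, abs_one, one_pow,
          one_mul, abs_of_nonneg hrr0,
          abs_of_nonneg (mul_nonneg hxN hPN0)]
      rw [e1]
      calc (1 - x + x ^ 2 * (1 - q ^ (4 * N)) / (1 + x)) * (x ^ N * PP q x N)
          ≤ 2 * (x ^ N * CC q) := by
            apply mul_le_mul hrr2 (mul_le_mul_of_nonneg_left hPN hxN)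
              (mul_nonneg hxN hPN0) (by norm_num)
        _ = 2 * CC q * x ^ N := by ring
    · have := (tendsto_pow_atTop_nhds_zero_of_lt_one hx0 hx1).const_mul (2 * CC q)
      simpa using this
  have hps : ∀ N, ∑ n ∈ Finset.range N, (AA q x n - x ^ 2 * q ^ 2 * AA q (x * q ^ 4) n)
      = VV q x 0 - VV q x N := by
    intro N
    calc ∑ n ∈ Finset.range N, (AA q x n - x ^ 2 * q ^ 2 * AA q (x * q ^ 4) n)
        = ∑ n ∈ Finset.range N, (VV q x n - VV q x (n + 1)) :=
          Finset.sum_congr rfl fun n _ => key_telescope hq0 hx0 n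
      _ = VV q x 0 - VV q x N := Finset.sum_range_sub' _ _
  have hV0 : VV q x 0 = 1 - x := by
    simp [VV, PP]
  have hc : HasSum (fun n => AA q x n - x ^ 2 * q ^ 2 * AA q (x * q ^ 4) n) (1 - x) := by
    rw [(hsA.sub hsB).hasSum_iff_tendsto_nat]
    have h1 : Tendsto (fun N => VV q x 0 - VV q x N) atTop (𝓝 (VV q x 0 - 0)) :=
      tendsto_const_nhds.sub hVlim
    have h1' := h1.congr fun N => (hps N).symm
    rw [hV0, sub_zero] at h1'
    exact h1'
  have h2 : HasSum (fun n => AA q x n - x ^ 2 * q ^ 2 * AA q (x * q ^ 4) n)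
      (HH q x - x ^ 2 * q ^ 2 * HH q (x * q ^ 4)) := by
    have hA : HasSum (AA q x) (HH q x) := hsA.hasSum
    have hB : HasSum (fun n => x ^ 2 * q ^ 2 * AA q (x * q ^ 4) n)
        (x ^ 2 * q ^ 2 * HH q (x * q ^ 4)) :=
      (summable_AA hq0 hq1 hy0 hy1).hasSum.mul_left _
    exact hA.sub hB
  have := hc.unique h2
  linarith


/-- The deficiency function for the order-2 functional equation. -/
noncomputable def DD (q y : ℝ) : ℝ := HH q y - 1 + y * HH q (y * q ^ 2)

lemma DD_step {q y : ℝ} (hq0 : 0 ≤ q) (hq1 : q < 1) (hy0 : 0 ≤ y) (hy1 : y < 1) :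
    DD q y = y * DD q (y * q ^ 2) := by
  have hq2le : q ^ 2 ≤ 1 := pow_le_one₀ hq0 hq1.le
  have e1 : y * q ^ 4 = y * q ^ 2 * q ^ 2 := by ring
  have h4 := FE4 hq0 hq1 hy0 hy1
  rw [e1] at h4
  rw [DD, DD, h4]
  ring

lemma DD_bound_pre {q x : ℝ} (hq0 : 0 ≤ q) (hq1 : q < 1) (hx1 : x < 1) :
    ∀ y, 0 ≤ y → y ≤ x → |DD q y| ≤ 1 + 2 * (CC q * (1 - x)⁻¹) := by
  intro y hy0 hyx
  have hy1 : y < 1 := lt_of_le_of_lt hyx hx1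
  have hq2le : q ^ 2 ≤ 1 := pow_le_one₀ hq0 hq1.le
  have hz0 : 0 ≤ y * q ^ 2 := by positivity
  have hzy : y * q ^ 2 ≤ y := by nlinarith [sq_nonneg q]
  have hz1 : y * q ^ 2 < 1 := lt_of_le_of_lt (hzy.trans hyx) hx1
  have hCx : (1 - y)⁻¹ ≤ (1 - x)⁻¹ := by
    apply inv_anti₀ (by linarith) (by linarith)
  have hCz : (1 - y * q ^ 2)⁻¹ ≤ (1 - x)⁻¹ := by
    apply inv_anti₀ (by linarith) (by linarith [hzy.trans hyx])
  have hC := (CC_pos q).le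
  have h1 : |HH q y| ≤ CC q * (1 - x)⁻¹ :=
    (HH_bound hq0 hq1 hy0 hy1).trans (by nlinarith)
  have h2 : |HH q (y * q ^ 2)| ≤ CC q * (1 - x)⁻¹ :=
    (HH_bound hq0 hq1 hz0 hz1).trans (by nlinarith)
  have h3 : |y * HH q (y * q ^ 2)| ≤ CC q * (1 - x)⁻¹ := by
    rw [abs_mul, abs_of_nonneg hy0]
    calc y * |HH q (y * q ^ 2)| ≤ 1 * (CC q * (1 - x)⁻¹) := by
          apply mul_le_mul hy1.le h2 (abs_nonneg _) (by norm_num)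
      _ = CC q * (1 - x)⁻¹ := one_mul _
  calc |DD q y| = |HH q y - 1 + y * HH q (y * q ^ 2)| := by rw [DD]
    _ ≤ |HH q y - 1| + |y * HH q (y * q ^ 2)| := abs_add_le _ _
    _ ≤ (|HH q y| + 1) + |y * HH q (y * q ^ 2)| := by
        have h4 : |HH q y - 1| ≤ |HH q y| + 1 := by
          calc |HH q y - 1| ≤ |HH q y| + |(-1 : ℝ)| := by
                rw [sub_eq_add_neg]; exact abs_add_le _ _
            _ = |HH q y| + 1 := by rw [abs_neg, abs_one]
        linarith
    _ ≤ 1 + 2 * (CC q * (1 - x)⁻¹) := by linarith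

lemma FE2 {q x : ℝ} (hq0 : 0 ≤ q) (hq1 : q < 1) (hx0 : 0 ≤ x) (hx1 : x < 1) :
    HH q x = 1 - x * HH q (x * q ^ 2) := by
  set M : ℝ := 1 + 2 * (CC q * (1 - x)⁻¹) with hM
  have hq2le : q ^ 2 ≤ 1 := pow_le_one₀ hq0 hq1.le
  have hDN : ∀ N : ℕ, ∀ y, 0 ≤ y → y ≤ x → |DD q y| ≤ y ^ N * M := by
    intro N
    induction N with
    | zero => intro y hy0 hyx; simpa using DD_bound_pre hq0 hq1 hx1 y hy0 hyx
    | succ N ih =>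
      intro y hy0 hyx
      have hy1 : y < 1 := lt_of_le_of_lt hyx hx1
      have hz0 : 0 ≤ y * q ^ 2 := by positivity
      have hzy : y * q ^ 2 ≤ y := by nlinarith [sq_nonneg q]
      have h1 := ih (y * q ^ 2) hz0 (hzy.trans hyx)
      have h2 : (y * q ^ 2) ^ N ≤ y ^ N := pow_le_pow_left₀ hz0 hzy N
      have hM0 : 0 ≤ M := by
        have h1x : (0:ℝ) < 1 - x := by linarith
        have h5 : (0:ℝ) ≤ CC q * (1 - x)⁻¹ :=
          mul_nonneg (CC_pos q).le (inv_nonneg.mpr h1x.le)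
        rw [hM]; linarith
      rw [DD_step hq0 hq1 hy0 hy1, abs_mul, abs_of_nonneg hy0]
      calc y * |DD q (y * q ^ 2)| ≤ y * ((y * q ^ 2) ^ N * M) :=
            mul_le_mul_of_nonneg_left h1 hy0
        _ ≤ y * (y ^ N * M) := by
            apply mul_le_mul_of_nonneg_left _ hy0
            exact mul_le_mul_of_nonneg_right h2 hM0
        _ = y ^ (N + 1) * M := by ring
  have hDx : DD q x = 0 := by
    have hlim : Tendsto (fun N : ℕ => x ^ N * M) atTop (𝓝 0) := by
      have := (tendsto_pow_atTop_nhds_zero_of_lt_one hx0 hx1).mul_const M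
      simpa using this
    have hle : |DD q x| ≤ 0 :=
      ge_of_tendsto' hlim fun N => hDN N x hx0 le_rfl
    exact abs_eq_zero.mp (le_antisymm hle (abs_nonneg _))
  rw [DD] at hDx
  linarith


lemma Gstep {q : ℝ} (hq0 : 0 ≤ q) (hq1 : q < 1) (j : ℕ) :
    HH q (q ^ (2 * j + 1)) = 1 - q ^ (2 * j + 1) * HH q (q ^ (2 * (j + 1) + 1)) := by
  have hx0 : (0:ℝ) ≤ q ^ (2 * j + 1) := by positivity
  have hx1 : q ^ (2 * j + 1) < 1 := pow_lt_one₀ hq0 hq1 (Nat.succ_ne_zero _)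
  have h := FE2 hq0 hq1 hx0 hx1
  have e2 : 2 * (j + 1) + 1 = (2 * j + 1) + 2 := by ring
  rw [h, e2, pow_add q (2 * j + 1) 2]

lemma partial_sum {q : ℝ} (hq0 : 0 ≤ q) (hq1 : q < 1) (N : ℕ) :
    HH q (q ^ (2 * 0 + 1)) = ∑ m ∈ Finset.range N, (-1 : ℝ) ^ m * q ^ (m ^ 2)
      + (-1) ^ N * q ^ (N ^ 2) * HH q (q ^ (2 * N + 1)) := by
  induction N with
  | zero => norm_num
  | succ N ih =>
    rw [ih, Gstep hq0 hq1 N, Finset.sum_range_succ,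
      show (N + 1) ^ 2 = N ^ 2 + (2 * N + 1) from by ring, pow_add,
      pow_succ (-1 : ℝ) N]
    ring


end SquareSeriesAux

open SquareSeriesAux in
theorem square_number_series_identity (q : ℝ) (hq0 : 0 ≤ q) (hq1 : q < 1) :
    ∑' n : ℕ, (-1 : ℝ) ^ n * q ^ (n ^ 2) =
      1 + ∑' n : ℕ, (-1 : ℝ) ^ (n + 1) * q ^ (n + 1) *
        ∏ k ∈ Finset.range (n + 1), (1 + q ^ (4 * k + 1)) / (1 + q ^ (4 * k + 3)) := by
  have hsum_lhs : Summable (fun n : ℕ => (-1 : ℝ) ^ n * q ^ (n ^ 2)) := by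
    apply Summable.of_norm
    apply Summable.of_nonneg_of_le (fun n => norm_nonneg _) (fun n => ?_)
      (summable_geometric_of_lt_one hq0 hq1)
    have h1 : n ≤ n ^ 2 := Nat.le_self_pow two_ne_zero n
    have h2 : q ^ (n ^ 2) ≤ q ^ n := pow_le_pow_of_le_one hq0 hq1.le h1
    have h3 : (0:ℝ) ≤ q ^ (n ^ 2) := by positivity
    rw [Real.norm_eq_abs, abs_mul, abs_pow, abs_neg, abs_one, one_pow, one_mul,
      abs_of_nonneg h3]
    exact h2
  -- the remainder tends to zero
  have hq1inv : (0:ℝ) < 1 - q := by linarith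
  have hrem : Tendsto (fun N : ℕ => (-1 : ℝ) ^ N * q ^ (N ^ 2) * HH q (q ^ (2 * N + 1)))
      atTop (𝓝 0) := by
    apply squeeze_zero_norm (a := fun N : ℕ => CC q * (1 - q)⁻¹ * q ^ N)
    · intro N
      have hx0 : (0:ℝ) ≤ q ^ (2 * N + 1) := by positivity
      have hx1 : q ^ (2 * N + 1) < 1 := pow_lt_one₀ hq0 hq1 (Nat.succ_ne_zero _)
      have hxq : q ^ (2 * N + 1) ≤ q := by
        calc q ^ (2 * N + 1) ≤ q ^ 1 := pow_le_pow_of_le_one hq0 hq1.le (by omega)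
          _ = q := pow_one q
      have hH := HH_bound hq0 hq1 hx0 hx1
      have hinv : (1 - q ^ (2 * N + 1))⁻¹ ≤ (1 - q)⁻¹ :=
        inv_anti₀ (by linarith) (by linarith)
      have hH2 : |HH q (q ^ (2 * N + 1))| ≤ CC q * (1 - q)⁻¹ := by
        calc |HH q (q ^ (2 * N + 1))| ≤ CC q * (1 - q ^ (2 * N + 1))⁻¹ := hH
          _ ≤ CC q * (1 - q)⁻¹ := mul_le_mul_of_nonneg_left hinv (CC_pos q).le
      have hq2 : q ^ (N ^ 2) ≤ q ^ N :=
        pow_le_pow_of_le_one hq0 hq1.le (Nat.le_self_pow two_ne_zero N)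
      have hq3 : (0:ℝ) ≤ q ^ (N ^ 2) := by positivity
      rw [Real.norm_eq_abs, abs_mul, abs_mul, abs_pow, abs_neg, abs_one, one_pow, one_mul,
        abs_of_nonneg hq3]
      calc q ^ (N ^ 2) * |HH q (q ^ (2 * N + 1))|
          ≤ q ^ N * (CC q * (1 - q)⁻¹) := by
            apply mul_le_mul hq2 hH2 (abs_nonneg _) (by positivity)
        _ = CC q * (1 - q)⁻¹ * q ^ N := by ring
    · have := (tendsto_pow_atTop_nhds_zero_of_lt_one hq0 hq1).const_mul (CC q * (1 - q)⁻¹)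
      simpa using this
  have hlhs : HasSum (fun n : ℕ => (-1 : ℝ) ^ n * q ^ (n ^ 2)) (HH q (q ^ 1)) := by
    rw [hsum_lhs.hasSum_iff_tendsto_nat]
    have h1 : Tendsto (fun N : ℕ => HH q (q ^ (2 * 0 + 1))
        - (-1 : ℝ) ^ N * q ^ (N ^ 2) * HH q (q ^ (2 * N + 1))) atTop
        (𝓝 (HH q (q ^ (2 * 0 + 1)) - 0)) := tendsto_const_nhds.sub hrem
    rw [sub_zero] at h1
    have h2 : Tendsto (fun N : ℕ => ∑ m ∈ Finset.range N, (-1 : ℝ) ^ m * q ^ (m ^ 2))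
        atTop (𝓝 (HH q (q ^ (2 * 0 + 1)))) :=
      h1.congr fun N => by have := partial_sum hq0 hq1 N; linarith
    simpa using h2
  have hlhs_eq : ∑' n : ℕ, (-1 : ℝ) ^ n * q ^ (n ^ 2) = HH q q := by
    rw [hlhs.tsum_eq, pow_one]
  have hsA : Summable (AA q q) := summable_AA hq0 hq1 hq0 hq1
  have hzero : AA q q 0 = 1 := by simp [AA, PP]
  have hterm : ∀ n : ℕ, AA q q (n + 1) = (-1 : ℝ) ^ (n + 1) * q ^ (n + 1) *
      ∏ k ∈ Finset.range (n + 1), (1 + q ^ (4 * k + 1)) / (1 + q ^ (4 * k + 3)) := by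
    intro n
    rw [AA]
    congr 1
    refine Finset.prod_congr rfl fun k _ => ?_
    rw [show 4 * k + 1 = 4 * k + 1 from rfl, pow_succ q (4 * k),
      show 4 * k + 3 = (4 * k + 2) + 1 from rfl, pow_succ q (4 * k + 2)]
    ring
  have hsplit : HH q q = 1 + ∑' n, AA q q (n + 1) := by
    rw [HH, Summable.tsum_eq_zero_add hsA, hzero]
  rw [hlhs_eq, hsplit]
  congr 1
  exact tsum_congr hterm
end

section
/- The function f(q) = 1 + ∑_{n=1}^∞ (-1)^n q^n · ∏_{k=0}^{n-1} (1+q^{4k+1})/(1+q^{4k+3}), defined for 0 < q < 1, satisfies f(q) = ∑_{n=0}^∞ (-1)^n q^{n^2}, and it is self-dual in the following sense: substituting p = 1/q into the expression 1 + ∑_{n=1}^∞ (-1)^n q^n ∏_{k=0}^{n-1}(1+q^{4k+1})/(1+q^{4k+3}) yields the series g(p) = 1 + ∑_{n=1}^∞ (-1)^n p^n ∏_{k=0}^{n-1}(1+p^{4k+1})/(1+p^{4k+3}), which has exactly the same functional form, i.e., the general term with q replaced by 1/q and simplified equals the general term in p. -/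
open Finset Filter

noncomputable section SqSelfDual

def sdP (q : ℝ) (j n : ℕ) : ℝ :=
  ∏ k ∈ Finset.range n, (1 + q ^ (4*(j+k)+1)) / (1 + q ^ (4*(j+k)+3))

def sdf (q : ℝ) (m j : ℕ) (n : ℕ) : ℝ := (-1)^n * q^(m*n) * sdP q j n

def sdF (q : ℝ) (m j : ℕ) : ℝ := ∑' n, sdf q m j n

section lemmas

variable {q : ℝ}

lemma sdP_pos (hq0 : 0 < q) (j n : ℕ) : 0 < sdP q j n := by
  apply Finset.prod_pos
  intro k _
  apply div_pos <;> positivity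

lemma sdP_zero (j : ℕ) : sdP q j 0 = 1 := by simp [sdP]

lemma sdP_succ (j n : ℕ) :
    sdP q j (n+1) = sdP q j n * ((1 + q ^ (4*(j+n)+1)) / (1 + q ^ (4*(j+n)+3))) := by
  unfold sdP
  rw [Finset.prod_range_succ]

lemma sdP_succ' (j n : ℕ) :
    sdP q j (n+1) = ((1 + q ^ (4*j+1)) / (1 + q ^ (4*j+3))) * sdP q (j+1) n := by
  unfold sdP
  rw [Finset.prod_range_succ', mul_comm]
  have h1 : ∏ k ∈ Finset.range n, (1 + q ^ (4*(j+(k+1))+1)) / (1 + q ^ (4*(j+(k+1))+3))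
      = ∏ k ∈ Finset.range n, (1 + q ^ (4*((j+1)+k)+1)) / (1 + q ^ (4*((j+1)+k)+3)) := by
    apply Finset.prod_congr rfl
    intro k _
    have h : j + (k+1) = (j+1) + k := by omega
    rw [h]
  rw [h1]
  norm_num

lemma sdP_le (hq0 : 0 < q) (hq1 : q < 1) : ∀ n j, sdP q j n ≤ 1 + q ^ (4*j+1) := by
  intro n
  induction n with
  | zero => intro j; rw [sdP_zero]; nlinarith [pow_pos hq0 (4*j+1)]
  | succ n ih =>
    intro j
    rw [sdP_succ']
    have hd : (0:ℝ) < 1 + q ^ (4*j+3) := by positivity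
    have hr : (0:ℝ) ≤ (1 + q ^ (4*j+1)) / (1 + q ^ (4*j+3)) := by positivity
    calc ((1 + q ^ (4*j+1)) / (1 + q ^ (4*j+3))) * sdP q (j+1) n
        ≤ ((1 + q ^ (4*j+1)) / (1 + q ^ (4*j+3))) * (1 + q ^ (4*(j+1)+1)) :=
          mul_le_mul_of_nonneg_left (ih (j+1)) hr
      _ ≤ ((1 + q ^ (4*j+1)) / (1 + q ^ (4*j+3))) * (1 + q ^ (4*j+3)) := by
          apply mul_le_mul_of_nonneg_left _ hr
          have : q ^ (4*(j+1)+1) ≤ q ^ (4*j+3) :=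
            pow_le_pow_of_le_one hq0.le hq1.le (by omega)
          linarith
      _ = 1 + q ^ (4*j+1) := div_mul_cancel₀ _ hd.ne'

lemma sdP_le_two (hq0 : 0 < q) (hq1 : q < 1) (j n : ℕ) : sdP q j n ≤ 2 := by
  have h := sdP_le hq0 hq1 n j
  have : q ^ (4*j+1) ≤ 1 := pow_le_one₀ hq0.le hq1.le
  linarith

lemma sdf_abs_le (hq0 : 0 < q) (hq1 : q < 1) (m j : ℕ) (hm : 1 ≤ m) (n : ℕ) :
    |sdf q m j n| ≤ 2 * q ^ n := by
  have hP := sdP_pos hq0 j n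
  have h1 : |sdf q m j n| = q ^ (m*n) * sdP q j n := by
    rw [sdf, abs_mul, abs_mul, abs_pow, abs_neg, abs_one, one_pow, one_mul,
      abs_of_pos (pow_pos hq0 _), abs_of_pos hP]
  rw [h1]
  have h2 : q ^ (m*n) ≤ q ^ n :=
    pow_le_pow_of_le_one hq0.le hq1.le (by nlinarith)
  calc q ^ (m*n) * sdP q j n ≤ q ^ n * 2 :=
        mul_le_mul h2 (sdP_le_two hq0 hq1 j n) hP.le (by positivity)
    _ = 2 * q ^ n := by ring

lemma sdf_summable (hq0 : 0 < q) (hq1 : q < 1) (m j : ℕ) (hm : 1 ≤ m) :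
    Summable (sdf q m j) := by
  apply summable_abs_iff.mp
  apply Summable.of_nonneg_of_le (fun n => abs_nonneg _) (sdf_abs_le hq0 hq1 m j hm)
  exact (summable_geometric_of_lt_one hq0.le hq1).mul_left 2

lemma sdF_abs_le (hq0 : 0 < q) (hq1 : q < 1) (m j : ℕ) (hm : 1 ≤ m) :
    |sdF q m j| ≤ 2 * (1-q)⁻¹ := by
  have hs : Summable (fun n => |sdf q m j n|) :=
    (sdf_summable hq0 hq1 m j hm).abs
  have hn : Summable (fun n => ‖sdf q m j n‖) := by
    simpa only [Real.norm_eq_abs] using hs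
  have h1 : ‖sdF q m j‖ ≤ ∑' n, ‖sdf q m j n‖ := norm_tsum_le_tsum_norm hn
  rw [Real.norm_eq_abs] at h1
  have h2 : ∑' n, ‖sdf q m j n‖ ≤ ∑' n : ℕ, 2 * q ^ n := by
    apply Summable.tsum_le_tsum _ hn ((summable_geometric_of_lt_one hq0.le hq1).mul_left 2)
    intro n
    rw [Real.norm_eq_abs]
    exact sdf_abs_le hq0 hq1 m j hm n
  have h3 : ∑' n : ℕ, 2 * q ^ n = 2 * (1-q)⁻¹ := by
    rw [tsum_mul_left, tsum_geometric_of_lt_one hq0.le hq1]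
  linarith

lemma sdf_zero_eq_one (m j : ℕ) : sdf q m j 0 = 1 := by simp [sdf, sdP_zero]

/-- Equation (F1): first-term extraction with product shift. -/
lemma keyF1 (hq0 : 0 < q) (hq1 : q < 1) (j : ℕ) :
    sdF q (4*j+1) j
      = 1 - q^(4*j+1) * ((1 + q^(4*j+1)) / (1 + q^(4*j+3))) * sdF q (4*j+1) (j+1) := by
  have hsum := sdf_summable hq0 hq1 (4*j+1) j (by omega)
  have hterm : ∀ n : ℕ, sdf q (4*j+1) j (n+1)
      = (-(q^(4*j+1) * ((1 + q^(4*j+1)) / (1 + q^(4*j+3))))) * sdf q (4*j+1) (j+1) n := by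
    intro n
    simp only [sdf]
    rw [sdP_succ', pow_succ]
    have he : q ^ ((4*j+1)*(n+1)) = q ^ ((4*j+1)*n) * q ^ (4*j+1) := by
      rw [← pow_add]; try congr 1 <;> ring
    rw [he]
    ring
  have h0 : sdF q (4*j+1) j = 1 + ∑' n, sdf q (4*j+1) j (n+1) := by
    rw [sdF, Summable.tsum_eq_zero_add hsum, sdf_zero_eq_one]
  rw [h0, tsum_congr hterm, tsum_mul_left, ← sdF]
  ring

/-- Equation (A): contiguous relation shifting exponent base. -/
lemma keyA (hq0 : 0 < q) (hq1 : q < 1) (j : ℕ) :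
    (1 + q^(4*j+1)) * sdF q (4*j+1) (j+1)
      = (1 + q^(4*j+3)) * (1 - q^(4*j+3) * sdF q (4*j+5) (j+1)) := by
  have hs : Summable (sdf q (4*j+1) (j+1)) := sdf_summable hq0 hq1 (4*j+1) (j+1) (by omega)
  have hu : Summable (sdf q (4*j+5) (j+1)) := sdf_summable hq0 hq1 (4*j+5) (j+1) (by omega)
  have hs1 : Summable (fun n => sdf q (4*j+1) (j+1) (n+1)) := (summable_nat_add_iff 1).mpr hs
  have hu1 : Summable (fun n => sdf q (4*j+5) (j+1) (n+1)) := (summable_nat_add_iff 1).mpr hu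
  -- termwise identity
  have hterm : ∀ n : ℕ, sdf q (4*j+1) (j+1) (n+1) + q^(4*j+1) * sdf q (4*j+1) (j+1) n
      = -(q^(8*j+6) * sdf q (4*j+5) (j+1) n) - q^(4*j+3) * sdf q (4*j+5) (j+1) (n+1) := by
    intro n
    have hd : (0:ℝ) < 1 + q ^ (4*((j+1)+n)+3) := by positivity
    have key : sdP q (j+1) (n+1) * (1 + q ^ (4*((j+1)+n)+3))
        = sdP q (j+1) n * (1 + q ^ (4*((j+1)+n)+1)) := by
      rw [sdP_succ]
      field_simp
    simp only [sdf]
    have e1 : q ^ ((4*j+1)*(n+1)) = q ^ ((4*j+1)*n) * q ^ (4*j+1) := by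
      rw [← pow_add]; try congr 1 <;> ring
    have e2 : q ^ ((4*j+5)*n) = q ^ ((4*j+1)*n) * q ^ (4*n) := by
      rw [← pow_add]; try congr 1 <;> ring
    have e3 : q ^ ((4*j+5)*(n+1)) = q ^ ((4*j+1)*n) * q ^ (4*n) * q ^ (4*j+5) := by
      rw [← pow_add, ← pow_add]; try congr 1 <;> ring
    have e4 : q ^ (4*((j+1)+n)+3) = q ^ (4*n) * q ^ (4*j+5) * q ^ 2 := by
      rw [← pow_add, ← pow_add]; try congr 1 <;> ring
    have e5 : q ^ (4*((j+1)+n)+1) = q ^ (4*n) * q ^ (4*j+5) := by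
      rw [← pow_add]; try congr 1 <;> ring
    have e6 : q ^ (8*j+6) = q ^ (4*j+1) * q ^ (4*j+5) := by
      rw [← pow_add]; try congr 1 <;> ring
    have e8 : q ^ (4*j+3) = q ^ (4*j+1) * q ^ 2 := by
      rw [← pow_add]; try congr 1 <;> ring
    rw [e4, e5] at key
    rw [e1, e2, e3, e6, e8, pow_succ]
    linear_combination (-((-1:ℝ)^n * q^((4*j+1)*n) * q^(4*j+1))) * key
  -- sum the termwise identity
  have hT1 : ∑' n, sdf q (4*j+1) (j+1) (n+1) = sdF q (4*j+1) (j+1) - 1 := by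
    rw [sdF, Summable.tsum_eq_zero_add hs, sdf_zero_eq_one]
    ring
  have hT2 : ∑' n, sdf q (4*j+5) (j+1) (n+1) = sdF q (4*j+5) (j+1) - 1 := by
    rw [sdF, Summable.tsum_eq_zero_add hu, sdf_zero_eq_one]
    ring
  have hsum1 : ∑' n, (sdf q (4*j+1) (j+1) (n+1) + q^(4*j+1) * sdf q (4*j+1) (j+1) n)
      = (sdF q (4*j+1) (j+1) - 1) + q^(4*j+1) * sdF q (4*j+1) (j+1) := by
    rw [Summable.tsum_add hs1 (hs.mul_left _), hT1, tsum_mul_left, ← sdF]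
  have hsum2 : ∑' n, (-(q^(8*j+6) * sdf q (4*j+5) (j+1) n) - q^(4*j+3) * sdf q (4*j+5) (j+1) (n+1))
      = -(q^(8*j+6) * sdF q (4*j+5) (j+1)) - q^(4*j+3) * (sdF q (4*j+5) (j+1) - 1) := by
    have h1 : Summable (fun n => -(q^(8*j+6) * sdf q (4*j+5) (j+1) n)) := (hu.mul_left _).neg
    have h2 : Summable (fun n => q^(4*j+3) * sdf q (4*j+5) (j+1) (n+1)) := hu1.mul_left _
    rw [show (fun n => -(q^(8*j+6) * sdf q (4*j+5) (j+1) n) - q^(4*j+3) * sdf q (4*j+5) (j+1) (n+1))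
        = (fun n => -(q^(8*j+6) * sdf q (4*j+5) (j+1) n) + -(q^(4*j+3) * sdf q (4*j+5) (j+1) (n+1))) by
          funext n; ring]
    rw [Summable.tsum_add h1 h2.neg, tsum_neg, tsum_neg, tsum_mul_left, tsum_mul_left, hT2, ← sdF]
    ring
  have hcomb : (sdF q (4*j+1) (j+1) - 1) + q^(4*j+1) * sdF q (4*j+1) (j+1)
      = -(q^(8*j+6) * sdF q (4*j+5) (j+1)) - q^(4*j+3) * (sdF q (4*j+5) (j+1) - 1) := by
    rw [← hsum1, ← hsum2]
    exact tsum_congr hterm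
  have e6 : q ^ (8*j+6) = q ^ (4*j+3) * q ^ (4*j+3) := by
    rw [← pow_add]; try congr 1 <;> ring
  rw [e6] at hcomb
  nlinarith [hcomb]

/-- The main recursion `G j = 1 - q^{4j+1} + q^{8j+4} G (j+1)`. -/
lemma sdG_rec (hq0 : 0 < q) (hq1 : q < 1) (j : ℕ) :
    sdF q (4*j+1) j = 1 - q^(4*j+1) + q^(8*j+4) * sdF q (4*j+5) (j+1) := by
  have h1 := keyF1 hq0 hq1 j
  have h2 := keyA hq0 hq1 j
  have d1 : (0:ℝ) < 1 + q^(4*j+1) := by positivity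
  have d3 : (0:ℝ) < 1 + q^(4*j+3) := by positivity
  have e : q ^ (8*j+4) = q ^ (4*j+1) * q ^ (4*j+3) := by
    rw [← pow_add]; try congr 1 <;> ring
  rw [h1, e]
  have hS1 : sdF q (4*j+1) (j+1)
      = (1 + q^(4*j+3)) * (1 - q^(4*j+3) * sdF q (4*j+5) (j+1)) / (1 + q^(4*j+1)) := by
    rw [eq_div_iff d1.ne', mul_comm]
    exact h2
  rw [hS1]
  field_simp
  ring


lemma theta_summable (hq0 : 0 < q) (hq1 : q < 1) :
    Summable (fun m : ℕ => (-1:ℝ)^m * q^(m^2)) := by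
  apply summable_abs_iff.mp
  apply Summable.of_nonneg_of_le (fun n => abs_nonneg _) _
      (summable_geometric_of_lt_one hq0.le hq1)
  intro m
  rw [abs_mul, abs_pow, abs_neg, abs_one, one_pow, one_mul, abs_of_pos (pow_pos hq0 _)]
  exact pow_le_pow_of_le_one hq0.le hq1.le (Nat.le_self_pow two_ne_zero m)

/-- Iterating the recursion. -/
lemma sdG_iterate (hq0 : 0 < q) (hq1 : q < 1) :
    ∀ N : ℕ, sdF q 1 0
      = (∑ m ∈ Finset.range (2*N), (-1:ℝ)^m * q^(m^2)) + q^(4*N^2) * sdF q (4*N+1) N := by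
  intro N
  induction N with
  | zero => norm_num
  | succ N ih =>
    rw [ih, sdG_rec hq0 hq1 N]
    have h2 : 2*(N+1) = (2*N) + 1 + 1 := by ring
    rw [h2, Finset.sum_range_succ, Finset.sum_range_succ]
    have hev : ((-1:ℝ))^(2*N) = 1 := by
      rw [pow_mul]; norm_num
    have hod : ((-1:ℝ))^(2*N+1) = -1 := by
      rw [pow_succ, hev]; norm_num
    have p1 : q^((2*N)^2) = q^(4*N^2) := by congr 1; ring
    have p2 : q^((2*N+1)^2) = q^(4*N^2) * q^(4*N+1) := by
      rw [← pow_add]; congr 1; ring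
    have p3 : q^(4*(N+1)^2) = q^(4*N^2) * q^(8*N+4) := by
      rw [← pow_add]; congr 1; ring
    have p4 : 4*(N+1)+1 = 4*N+5 := by ring
    rw [hev, hod, p1, p2, p3, p4]
    ring

lemma sdF_eq_theta (hq0 : 0 < q) (hq1 : q < 1) :
    sdF q 1 0 = ∑' m : ℕ, (-1:ℝ)^m * q^(m^2) := by
  have hθ := theta_summable hq0 hq1
  have t1 : Tendsto (fun N : ℕ => ∑ m ∈ Finset.range (2*N), (-1:ℝ)^m * q^(m^2))
      atTop (nhds (∑' m : ℕ, (-1:ℝ)^m * q^(m^2))) := by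
    have hmono : StrictMono (fun N : ℕ => 2*N) := by
      intro a b hab; dsimp only; omega
    exact (hθ.hasSum.tendsto_sum_nat).comp hmono.tendsto_atTop
  have t2 : Tendsto (fun N : ℕ => q^(4*N^2) * sdF q (4*N+1) N) atTop (nhds 0) := by
    have hbnd : ∀ N : ℕ, ‖q^(4*N^2) * sdF q (4*N+1) N‖ ≤ q^N * (2 * (1-q)⁻¹) := by
      intro N
      rw [Real.norm_eq_abs, abs_mul, abs_of_pos (pow_pos hq0 _)]
      have hb := sdF_abs_le hq0 hq1 (4*N+1) N (by omega)
      have hq : q^(4*N^2) ≤ q^N :=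
        pow_le_pow_of_le_one hq0.le hq1.le (by nlinarith)
      have habs : (0:ℝ) ≤ |sdF q (4*N+1) N| := abs_nonneg _
      have hqp : (0:ℝ) ≤ q^N := by positivity
      nlinarith [pow_pos hq0 (4*N^2)]
    have hg : Tendsto (fun N : ℕ => q^N * (2 * (1-q)⁻¹)) atTop (nhds 0) := by
      have := (tendsto_pow_atTop_nhds_zero_of_lt_one hq0.le hq1).mul_const (2 * (1-q)⁻¹)
      simpa using this
    exact squeeze_zero_norm hbnd hg
  have t3 := t1.add t2
  rw [add_zero] at t3
  have t4 : Tendsto (fun _ : ℕ => sdF q 1 0) atTop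
      (nhds (∑' m : ℕ, (-1:ℝ)^m * q^(m^2))) := by
    apply t3.congr
    intro N
    exact (sdG_iterate hq0 hq1 N).symm
  exact tendsto_nhds_unique tendsto_const_nhds t4

/-- Part 1 of the theorem. -/
lemma part1 (hq0 : 0 < q) (hq1 : q < 1) :
    1 + ∑' n : ℕ, (-1 : ℝ) ^ (n + 1) * q ^ (n + 1) *
        ∏ k ∈ Finset.range (n + 1), (1 + q ^ (4 * k + 1)) / (1 + q ^ (4 * k + 3))
      = ∑' n : ℕ, (-1 : ℝ) ^ n * q ^ (n ^ 2) := by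
  have hsum := sdf_summable hq0 hq1 1 0 (le_refl 1)
  have h0 : sdF q 1 0 = 1 + ∑' n, sdf q 1 0 (n+1) := by
    rw [sdF, Summable.tsum_eq_zero_add hsum, sdf_zero_eq_one]
  have hterm : ∀ n : ℕ, sdf q 1 0 (n+1)
      = (-1 : ℝ) ^ (n + 1) * q ^ (n + 1) *
        ∏ k ∈ Finset.range (n + 1), (1 + q ^ (4 * k + 1)) / (1 + q ^ (4 * k + 3)) := by
    intro n
    simp only [sdf, sdP, one_mul, Nat.zero_add]
  rw [← tsum_congr hterm, ← h0]
  exact sdF_eq_theta hq0 hq1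

/-- Part 2 of the theorem. -/
lemma part2 {q : ℝ} (hq0 : 0 < q) (n : ℕ) :
    q ^ n * ∏ k ∈ Finset.range n, (1 + q ^ (4 * k + 1)) / (1 + q ^ (4 * k + 3)) =
      (1 / q) ^ n *
        ∏ k ∈ Finset.range n, (1 + (1 / q) ^ (4 * k + 1)) / (1 + (1 / q) ^ (4 * k + 3)) := by
  have hq : q ≠ 0 := hq0.ne'
  have hfac : ∀ k : ℕ, (1 + (1 / q) ^ (4 * k + 1)) / (1 + (1 / q) ^ (4 * k + 3))
      = q^2 * ((1 + q ^ (4 * k + 1)) / (1 + q ^ (4 * k + 3))) := by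
    intro k
    have hd1 : (0:ℝ) < 1 + q ^ (4 * k + 3) := by positivity
    have hd2 : (0:ℝ) < 1 + (1 / q) ^ (4 * k + 3) := by positivity
    rw [one_div, inv_pow, inv_pow]
    field_simp
    ring
  rw [Finset.prod_congr rfl (fun k _ => hfac k), Finset.prod_mul_distrib,
    Finset.prod_const, Finset.card_range, ← mul_assoc, ← mul_pow]
  have h : (1/q) * q^2 = q := by
    field_simp
  rw [h]

end lemmas

end SqSelfDual

theorem square_series_self_duality :
    (∀ q : ℝ, 0 < q → q < 1 →
      1 + ∑' n : ℕ, (-1 : ℝ) ^ (n + 1) * q ^ (n + 1) *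
          ∏ k ∈ Finset.range (n + 1), (1 + q ^ (4 * k + 1)) / (1 + q ^ (4 * k + 3)) =
        ∑' n : ℕ, (-1 : ℝ) ^ n * q ^ (n ^ 2)) ∧
    (∀ q : ℝ, 0 < q → ∀ n : ℕ, 1 ≤ n →
      q ^ n * ∏ k ∈ Finset.range n, (1 + q ^ (4 * k + 1)) / (1 + q ^ (4 * k + 3)) =
        (1 / q) ^ n *
          ∏ k ∈ Finset.range n, (1 + (1 / q) ^ (4 * k + 1)) / (1 + (1 / q) ^ (4 * k + 3))) := by
  constructor
  · intro q hq0 hq1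
    exact part1 hq0 hq1
  · intro q hq0 n _
    exact part2 hq0 n
end

section
/- For every real q > 0 and every positive integer n, q^n · ∏_{k=0}^{n-1} (1+q^{4k+1})/(1+q^{4k+3}) = p^n · ∏_{k=0}^{n-1} (1+p^{4k+1})/(1+p^{4k+3}), where p = 1/q. -/
/-!
Since `1 + q⁻ᵐ = q⁻ᵐ (1 + qᵐ)`, replacing `q` by `1/q` multiplies each factor
`(1 + q^(4k+1)) / (1 + q^(4k+3))` by `q²`; the `n` factors contribute `q^(2n)`,
which is exactly the ratio `q^n / q^(-n)` of the prefactors.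
-/

section InvolutionFactors

variable {K : Type*} [Field K] {x : K}

lemma one_add_inv_pow (hx : x ≠ 0) (m : ℕ) : 1 + x⁻¹ ^ m = x⁻¹ ^ m * (1 + x ^ m) := by
  rw [mul_add, mul_one, inv_pow, inv_mul_cancel₀ (pow_ne_zero m hx), add_comm]

lemma one_add_inv_pow_div_one_add_inv_pow (hx : x ≠ 0) (a d : ℕ) :
    (1 + x⁻¹ ^ a) / (1 + x⁻¹ ^ (a + d)) = x ^ d * ((1 + x ^ a) / (1 + x ^ (a + d))) := by
  have hscale : x⁻¹ ^ a / x⁻¹ ^ (a + d) = x ^ d := by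
    rw [inv_pow, inv_pow, inv_div_inv, pow_add, mul_div_cancel_left₀ _ (pow_ne_zero a hx)]
  rw [one_add_inv_pow hx, one_add_inv_pow hx, mul_div_mul_comm, hscale]

lemma inv_pow_mul_prod_range_eq (hx : x ≠ 0) (n : ℕ) :
    x⁻¹ ^ n * ∏ k ∈ Finset.range n, (1 + x⁻¹ ^ (4 * k + 1)) / (1 + x⁻¹ ^ (4 * k + 3)) =
      x ^ n * ∏ k ∈ Finset.range n, (1 + x ^ (4 * k + 1)) / (1 + x ^ (4 * k + 3)) := by
  have hfactor (k : ℕ) : (1 + x⁻¹ ^ (4 * k + 1)) / (1 + x⁻¹ ^ (4 * k + 3)) =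
      x ^ 2 * ((1 + x ^ (4 * k + 1)) / (1 + x ^ (4 * k + 3))) :=
    one_add_inv_pow_div_one_add_inv_pow hx (4 * k + 1) 2
  have hprefactor : x⁻¹ ^ n * (x ^ 2) ^ n = x ^ n := by
    rw [← pow_mul, two_mul, pow_add, ← mul_assoc, inv_pow, inv_mul_cancel₀ (pow_ne_zero n hx),
      one_mul]
  simp_rw [hfactor, Finset.prod_mul_distrib, Finset.prod_const, Finset.card_range, ← mul_assoc,
    hprefactor]

end InvolutionFactors

theorem square_series_term_self_duality_general (q : ℝ) (hq : 0 < q) (n : ℕ) :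
    q ^ n * ∏ k ∈ Finset.range n, (1 + q ^ (4 * k + 1)) / (1 + q ^ (4 * k + 3)) =
      (1 / q) ^ n *
        ∏ k ∈ Finset.range n, (1 + (1 / q) ^ (4 * k + 1)) / (1 + (1 / q) ^ (4 * k + 3)) := by
  simpa only [one_div] using (inv_pow_mul_prod_range_eq hq.ne' n).symm

theorem square_series_term_self_duality (q : ℝ) (hq : 0 < q) (n : ℕ) (hn : 1 ≤ n) :
    q ^ n * ∏ k ∈ Finset.range n, (1 + q ^ (4 * k + 1)) / (1 + q ^ (4 * k + 3)) =
      (1 / q) ^ n *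
        ∏ k ∈ Finset.range n, (1 + (1 / q) ^ (4 * k + 1)) / (1 + (1 / q) ^ (4 * k + 3)) :=
  square_series_term_self_duality_general q hq n
end

section
/- For real q with 0 ≤ q < 1, the limit as ρ → ∞ of S_ρ^{(1)}(q) = ∑_{n=0}^∞ (-1)^n q^{n((ρ-2)n-(ρ-4))/2} equals 1 - q; that is, for each fixed q ∈ [0,1), lim_{ρ→∞} S_ρ^{(1)}(q) = 1 - q. -/
private lemma exp_ge (ρ n : ℕ) (hρ : 4 ≤ ρ) :
    n ≤ n * ((ρ - 2) * n - (ρ - 4)) / 2 := by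
  obtain ⟨r, rfl⟩ : ∃ r, ρ = r + 4 := ⟨ρ - 4, by omega⟩
  rcases Nat.eq_zero_or_pos n with rfl | hn
  · simp
  rw [Nat.le_div_iff_mul_le (by norm_num)]
  have h1 : (r + 4 - 2) = r + 2 := by omega
  have h2 : (r + 4 - 4) = r := by omega
  rw [h1, h2]
  have hsub : r ≤ (r + 2) * n := by nlinarith
  zify [hsub]
  nlinarith

private lemma exp_tail (ρ n : ℕ) (hρ : 4 ≤ ρ) :
    n + ρ - 2 ≤ (n + 2) * ((ρ - 2) * (n + 2) - (ρ - 4)) / 2 := by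
  obtain ⟨r, rfl⟩ : ∃ r, ρ = r + 4 := ⟨ρ - 4, by omega⟩
  rw [Nat.le_div_iff_mul_le (by norm_num)]
  have h1 : (r + 4 - 2) = r + 2 := by omega
  have h2 : (r + 4 - 4) = r := by omega
  have h3 : n + (r + 4) - 2 = n + r + 2 := by omega
  rw [h1, h2, h3]
  have hsub : r ≤ (r + 2) * (n + 2) := by nlinarith
  zify [hsub]
  nlinarith

private lemma exp_one (ρ : ℕ) (hρ : 4 ≤ ρ) :
    1 * ((ρ - 2) * 1 - (ρ - 4)) / 2 = 1 := by
  omega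

theorem polygonal_series_limit (q : ℝ) (hq0 : 0 ≤ q) (hq1 : q < 1) :
    Filter.Tendsto
      (fun ρ : ℕ => ∑' n : ℕ, (-1 : ℝ) ^ n * q ^ (n * ((ρ - 2) * n - (ρ - 4)) / 2))
      Filter.atTop (nhds (1 - q)) := by
  set f : ℕ → ℕ → ℝ := fun ρ n => (-1 : ℝ) ^ n * q ^ (n * ((ρ - 2) * n - (ρ - 4)) / 2)
    with hf
  have habs : ∀ ρ n, ‖f ρ n‖ = q ^ (n * ((ρ - 2) * n - (ρ - 4)) / 2) := by
    intro ρ n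
    simp [hf, abs_mul, abs_pow, abs_of_nonneg hq0]
  have hsumgeo : Summable (fun n : ℕ => q ^ n) := summable_geometric_of_lt_one hq0 hq1
  have hsum : ∀ ρ, 4 ≤ ρ → Summable (f ρ) := by
    intro ρ hρ
    apply Summable.of_norm
    apply hsumgeo.of_nonneg_of_le (fun n => norm_nonneg _)
    intro n
    rw [habs]
    exact pow_le_pow_of_le_one hq0 hq1.le (exp_ge ρ n hρ)
  -- tail summable
  have hsumtail : ∀ ρ, 4 ≤ ρ → Summable (fun n => f ρ (n + 2)) := by
    intro ρ hρ
    exact (hsum ρ hρ).comp_injective (fun a b => by omega)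
  -- decomposition
  have hdecomp : ∀ ρ, 4 ≤ ρ →
      (∑' n : ℕ, f ρ n) = (1 - q) + ∑' n : ℕ, f ρ (n + 2) := by
    intro ρ hρ
    rw [← Summable.sum_add_tsum_nat_add 2 (hsum ρ hρ)]
    congr 1
    rw [Finset.sum_range_succ, Finset.sum_range_one]
    simp only [hf]
    rw [exp_one ρ hρ]
    norm_num
    ring
  -- bound on tail
  have hbound : ∀ ρ, 4 ≤ ρ →
      ‖∑' n : ℕ, f ρ (n + 2)‖ ≤ (1 - q)⁻¹ * q ^ (ρ - 2) := by
    intro ρ hρ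
    have h1 : ∀ n : ℕ, ‖f ρ (n + 2)‖ ≤ q ^ (n + ρ - 2) := by
      intro n
      rw [habs]
      exact pow_le_pow_of_le_one hq0 hq1.le (exp_tail ρ n hρ)
    have h2 : ∀ n : ℕ, q ^ (n + ρ - 2) = q ^ n * q ^ (ρ - 2) := by
      intro n
      rw [← pow_add]
      congr 1
      omega
    have hsumb : Summable (fun n : ℕ => q ^ (n + ρ - 2)) := by
      simp_rw [h2]
      exact hsumgeo.mul_right _
    calc ‖∑' n : ℕ, f ρ (n + 2)‖ ≤ ∑' n : ℕ, ‖f ρ (n + 2)‖ :=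
          norm_tsum_le_tsum_norm ((hsumtail ρ hρ).norm)
      _ ≤ ∑' n : ℕ, q ^ (n + ρ - 2) :=
          Summable.tsum_le_tsum h1 ((hsumtail ρ hρ).norm) hsumb
      _ = (∑' n : ℕ, q ^ n) * q ^ (ρ - 2) := by
          simp_rw [h2]; exact tsum_mul_right
      _ = (1 - q)⁻¹ * q ^ (ρ - 2) := by
          rw [tsum_geometric_of_lt_one hq0 hq1]
  -- the tail tends to 0
  have htail0 : Filter.Tendsto (fun ρ : ℕ => ∑' n : ℕ, f ρ (n + 2))
      Filter.atTop (nhds 0) := by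
    apply squeeze_zero_norm'
    · filter_upwards [Filter.eventually_ge_atTop 4] with ρ hρ
      exact hbound ρ hρ
    · have h1 : Filter.Tendsto (fun ρ : ℕ => q ^ (ρ - 2)) Filter.atTop (nhds 0) := by
        exact (tendsto_pow_atTop_nhds_zero_of_lt_one hq0 hq1).comp
          (Filter.tendsto_sub_atTop_nat 2)
      have := h1.const_mul ((1 - q)⁻¹)
      simpa using this
  have hmain : Filter.Tendsto (fun ρ : ℕ => (1 - q) + ∑' n : ℕ, f ρ (n + 2))
      Filter.atTop (nhds (1 - q)) := by
    have := (tendsto_const_nhds (x := (1 - q)) (f := Filter.atTop (α := ℕ))).add htail0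
    simpa using this
  apply hmain.congr'
  filter_upwards [Filter.eventually_ge_atTop 4] with ρ hρ
  exact (hdecomp ρ hρ).symm
end

section
/- For real q with 0 ≤ q < 1, the limit as κ → ∞ (κ a positive integer) of S_κ^{(2)}(q) = ∑_{n=0}^∞ q^n (q;q^κ)_n equals 1 + q, where (q;q^κ)_n = ∏_{k=0}^{n-1}(1 - q^{1+κk}). -/
open Filter Topology

theorem pochhammer_series_limit (q : ℝ) (hq0 : 0 ≤ q) (hq1 : q < 1) :
    Filter.Tendsto
      (fun κ : ℕ => ∑' n : ℕ, q ^ n * ∏ k ∈ Finset.range n, (1 - q ^ (1 + κ * k)))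
      Filter.atTop (nhds (1 + q)) := by
  have hpow_le : ∀ m : ℕ, 0 < m → q ^ m ≤ q := by
    intro m hm
    calc q ^ m ≤ q ^ 1 := pow_le_pow_of_le_one hq0 hq1.le hm
    _ = q := pow_one q
  set g : ℕ → ℝ := fun n => q ^ n * ∏ k ∈ Finset.range n, (if k = 0 then 1 - q else 1)
    with hg
  have hsum : (∑' n, g n) = 1 + q := by
    rw [Summable.tsum_eq_zero_add]
    · have h0 : g 0 = 1 := by simp [hg]
      have h1 : ∀ n : ℕ, g (n + 1) = (1 - q) * q * q ^ n := by
        intro n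
        simp only [hg]
        rw [Finset.prod_ite_eq' (Finset.range (n+1)) 0 (fun _ => (1-q:ℝ))]
        simp [pow_succ]
        ring
      simp only [h0, h1]
      rw [tsum_mul_left, tsum_geometric_of_lt_one hq0 hq1]
      have hne : (1:ℝ) - q ≠ 0 := by linarith
      field_simp
    · refine Summable.of_nonneg_of_le ?_ ?_ (summable_geometric_of_lt_one hq0 hq1)
      · intro n
        apply mul_nonneg (pow_nonneg hq0 _)
        apply Finset.prod_nonneg
        intro k _
        split <;> nlinarith
      · intro n
        have : ∏ k ∈ Finset.range n, (if k = 0 then 1 - q else (1:ℝ)) ≤ 1 := by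
          apply Finset.prod_le_one
          · intro k _; split <;> nlinarith
          · intro k _; split <;> nlinarith
        simp only [hg]
        nlinarith [pow_nonneg hq0 n]
  rw [← hsum]
  apply tendsto_tsum_of_dominated_convergence (bound := fun n => q ^ n)
    (summable_geometric_of_lt_one hq0 hq1)
  · intro n
    apply Tendsto.const_mul
    apply tendsto_finset_prod
    intro k _
    rcases Nat.eq_zero_or_pos k with rfl | hk
    · simpa using tendsto_const_nhds
    · have : Tendsto (fun κ : ℕ => q ^ (1 + κ * k)) atTop (𝓝 0) := by
        have hqk : q ^ k < 1 := pow_lt_one₀ hq0 hq1 hk.ne'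
        have hqk0 : 0 ≤ q ^ k := pow_nonneg hq0 k
        have := tendsto_pow_atTop_nhds_zero_of_lt_one hqk0 hqk
        have h2 : Tendsto (fun κ : ℕ => q * (q ^ k) ^ κ) atTop (𝓝 (q * 0)) :=
          this.const_mul q
        simp only [mul_zero] at h2
        convert h2 using 2 with κ
        rw [pow_add, pow_one, ← pow_mul, mul_comm κ k]
      have h3 := (tendsto_const_nhds (x := (1:ℝ)) (f := atTop)).sub this
      rw [if_neg hk.ne']
      simpa using h3
  · filter_upwards with κ n
    rw [Real.norm_eq_abs, abs_mul, abs_pow, abs_of_nonneg hq0]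
    have hb : ∀ k ∈ Finset.range n, (0:ℝ) ≤ 1 - q ^ (1 + κ * k) ∧ 1 - q ^ (1 + κ * k) ≤ 1 := by
      intro k _
      have h1 : q ^ (1 + κ * k) ≤ 1 := pow_le_one₀ hq0 hq1.le
      have h2 : 0 ≤ q ^ (1 + κ * k) := pow_nonneg hq0 _
      constructor <;> linarith
    have hprod0 : (0:ℝ) ≤ ∏ k ∈ Finset.range n, (1 - q ^ (1 + κ * k)) :=
      Finset.prod_nonneg fun k hk => (hb k hk).1
    have hprod1 : ∏ k ∈ Finset.range n, (1 - q ^ (1 + κ * k)) ≤ 1 :=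
      Finset.prod_le_one (fun k hk => (hb k hk).1) (fun k hk => (hb k hk).2)
    rw [abs_of_nonneg hprod0]
    exact mul_le_of_le_one_right (pow_nonneg hq0 n) hprod1
end

section
/- For real p with 0 < p < 1, the limit as κ → ∞ (κ a positive integer) of ∑_{n=0}^∞ p^{(κ-1)n+1}/(p;p^κ)_{n+1} equals p/(1-p), where (p;p^κ)_m = ∏_{k=0}^{m-1}(1 - p^{1+κk}). -/
theorem regularized_series_limit (p : ℝ) (hp0 : 0 < p) (hp1 : p < 1) :
    Filter.Tendsto
      (fun κ : ℕ => ∑' n : ℕ, p ^ ((κ - 1) * n + 1) /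
        ∏ k ∈ Finset.range (n + 1), (1 - p ^ (1 + κ * k)))
      Filter.atTop (nhds (p / (1 - p))) := by
  have hq : 0 < 1 - p := by linarith
  set C : ℝ := 2 * p / (1 - p) ^ 2 with hC
  have hpow : Filter.Tendsto (fun κ : ℕ => p ^ (κ - 1)) Filter.atTop (nhds 0) := by
    have h1 : Filter.Tendsto (fun n : ℕ => p ^ n) Filter.atTop (nhds 0) :=
      tendsto_pow_atTop_nhds_zero_of_lt_one hp0.le hp1
    exact h1.comp (Filter.tendsto_sub_atTop_nat 1)
  have hupper : Filter.Tendsto (fun κ : ℕ => p / (1 - p) + C * p ^ (κ - 1))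
      Filter.atTop (nhds (p / (1 - p))) := by
    have := ((hpow.const_mul C).const_add (p / (1 - p)))
    simpa using this
  have hev : ∀ᶠ κ : ℕ in Filter.atTop, p ^ (κ - 1) ≤ (1 - p) / 2 := by
    have : ∀ᶠ κ : ℕ in Filter.atTop, p ^ (κ - 1) < (1 - p) / 2 :=
      hpow.eventually_lt_const (by positivity)
    exact this.mono fun κ h => h.le
  have key : ∀ κ : ℕ, p ^ (κ - 1) ≤ (1 - p) / 2 →
      p / (1 - p) ≤ (∑' n : ℕ, p ^ ((κ - 1) * n + 1) /
        ∏ k ∈ Finset.range (n + 1), (1 - p ^ (1 + κ * k))) ∧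
      (∑' n : ℕ, p ^ ((κ - 1) * n + 1) /
        ∏ k ∈ Finset.range (n + 1), (1 - p ^ (1 + κ * k))) ≤
        p / (1 - p) + C * p ^ (κ - 1) := by
    intro κ hκ
    set r : ℝ := p ^ (κ - 1) / (1 - p) with hrdef
    have hr0 : 0 ≤ r := by positivity
    have hr : r ≤ 1 / 2 := by
      rw [hrdef, div_le_div_iff₀ hq (by norm_num)]
      linarith
    have hr1 : r < 1 := lt_of_le_of_lt hr (by norm_num)
    set term : ℕ → ℝ := fun n => p ^ ((κ - 1) * n + 1) /
        ∏ k ∈ Finset.range (n + 1), (1 - p ^ (1 + κ * k)) with hterm_def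
    have hD : ∀ n : ℕ, (1 - p) ^ (n + 1) ≤
        ∏ k ∈ Finset.range (n + 1), (1 - p ^ (1 + κ * k)) := by
      intro n
      calc (1 - p) ^ (n + 1) = ∏ _k ∈ Finset.range (n + 1), (1 - p) := by
            rw [Finset.prod_const, Finset.card_range]
        _ ≤ _ := ?_
      refine Finset.prod_le_prod (fun i _ => hq.le) (fun i _ => ?_)
      have : p ^ (1 + κ * i) ≤ p ^ 1 :=
        pow_le_pow_of_le_one hp0.le hp1.le (by omega)
      simp only [pow_one] at this; linarith
    have hDpos : ∀ n : ℕ, 0 < ∏ k ∈ Finset.range (n + 1), (1 - p ^ (1 + κ * k)) :=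
      fun n => lt_of_lt_of_le (pow_pos hq _) (hD n)
    have hterm_nonneg : ∀ n, 0 ≤ term n := fun n =>
      div_nonneg (pow_nonneg hp0.le _) (hDpos n).le
    have hterm_le : ∀ n, term n ≤ (p / (1 - p)) * r ^ n := by
      intro n
      have h1 : term n ≤ p ^ ((κ - 1) * n + 1) / (1 - p) ^ (n + 1) :=
        div_le_div_of_nonneg_left (pow_nonneg hp0.le _) (pow_pos hq _) (hD n)
      refine h1.trans_eq ?_
      rw [hrdef, div_pow, pow_add, pow_mul, pow_one, pow_succ]
      field_simp
    have hgeo : Summable (fun n : ℕ => (p / (1 - p)) * r ^ n) :=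
      (summable_geometric_of_lt_one hr0 hr1).mul_left _
    have hsum : Summable term :=
      Summable.of_nonneg_of_le hterm_nonneg hterm_le hgeo
    have hterm0 : term 0 = p / (1 - p) := by
      simp [hterm_def]
    constructor
    · have := Summable.le_tsum hsum 0 (fun i _ => hterm_nonneg i)
      rwa [hterm0] at this
    · rw [Summable.tsum_eq_zero_add hsum, hterm0]
      have htail_sum : Summable (fun n : ℕ => term (n + 1)) :=
        (summable_nat_add_iff 1).2 hsum
      have hgeo' : Summable (fun n : ℕ => (p / (1 - p)) * r ^ (n + 1)) := by
        have : (fun n : ℕ => (p / (1 - p)) * r ^ (n + 1)) =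
            fun n : ℕ => ((p / (1 - p)) * r) * r ^ n := by
          funext n; rw [pow_succ]; ring
        rw [this]
        exact (summable_geometric_of_lt_one hr0 hr1).mul_left _
      have h2 : (∑' n : ℕ, term (n + 1)) ≤ ∑' n : ℕ, (p / (1 - p)) * r ^ (n + 1) :=
        Summable.tsum_le_tsum (fun n => hterm_le (n + 1)) htail_sum hgeo'
      have h3 : (∑' n : ℕ, (p / (1 - p)) * r ^ (n + 1)) =
          ((p / (1 - p)) * r) * (1 - r)⁻¹ := by
        have : (fun n : ℕ => (p / (1 - p)) * r ^ (n + 1)) =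
            fun n : ℕ => ((p / (1 - p)) * r) * r ^ n := by
          funext n; rw [pow_succ]; ring
        rw [this, tsum_mul_left, tsum_geometric_of_lt_one hr0 hr1]
      have h4 : ((p / (1 - p)) * r) * (1 - r)⁻¹ ≤ C * p ^ (κ - 1) := by
        have hinv : (1 - r)⁻¹ ≤ 2 := by
          rw [inv_le_comm₀ (by linarith) (by norm_num)]
          linarith
        have hnn : 0 ≤ (p / (1 - p)) * r := by positivity
        calc ((p / (1 - p)) * r) * (1 - r)⁻¹ ≤ ((p / (1 - p)) * r) * 2 :=
              mul_le_mul_of_nonneg_left hinv hnn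
          _ = C * p ^ (κ - 1) := by
              rw [hC, hrdef]; field_simp
      linarith [h2.trans (h3.le.trans h4)]
  refine tendsto_of_tendsto_of_tendsto_of_le_of_le' tendsto_const_nhds hupper
    (hev.mono fun κ h => (key κ h).1) (hev.mono fun κ h => (key κ h).2)
end
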